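/- arXiv:quant-ph/0211121 — 9 statements merged into one kernel-verified Lean document; each statement's English description precedes it below -/
import Mathlib

section
/- Sufficiency of the optimality conditions: Let {Π̂_i}_{i=0}^m be a measurement with P_I({Π̂_i}) = β. Suppose there exist a Hermitian n×n matrix X and a real number δ such that X − p_i ρ_i is positive semidefinite for every 1 ≤ i ≤ m, X − δΔ is positive semidefinite, (X − p_i ρ_i)Π̂_i = 0 for every 1 ≤ i ≤ m, and (X − δΔ)Π̂_0 = 0. Then {Π̂_i} maximizes the probability of correct detection among all measurements with inconclusive rate β: for every measurement {Π_i}_{i=0}^m with P_I({Π_i}) = β one has P_D({Π_i}) ≤ P_D({Π̂_i}). -/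
/-!
Weak duality for the semidefinite program. If `∑ₖ Nₖ = 1`, then
`tr X = ∑ₖ tr((X - cₖ Aₖ) Nₖ) + ∑ₖ cₖ tr(Aₖ Nₖ)`. Feasibility of the certificate makes every
slack term `tr((X - cₖ Aₖ) Nₖ)` nonnegative for a measurement `N`, and complementary slackness
makes them vanish for the candidate. With the inconclusive outcome weighted by `δ` against `Δ`,
its contribution `δ tr(Δ N₀) = δ β` is the same for all competitors, so
`P_D(N) ≤ tr X - δ β = P_D(Π̂)`.
-/

open Matrix ComplexOrder

namespace Matrix

variable {ι 𝕜 : Type*} [Fintype ι] [RCLike 𝕜]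

theorem PosSemidef.trace_mul_nonneg {A B : Matrix ι ι 𝕜} (hA : A.PosSemidef)
    (hB : B.PosSemidef) : 0 ≤ (A * B).trace := by
  classical
  open MatrixOrder in
  obtain ⟨C, rfl⟩ := CStarAlgebra.nonneg_iff_eq_star_mul_self.mp hA.nonneg
  rw [star_eq_conjTranspose, Matrix.mul_assoc, trace_mul_comm]
  exact (hB.mul_mul_conjTranspose_same C).trace_nonneg

variable [DecidableEq ι] {κ : Type*} [Fintype κ]

theorem trace_eq_sum_trace_sub_smul_mul_add {R : Type*} [CommRing R]
    (X : Matrix ι ι R) (c : κ → R) (A N : κ → Matrix ι ι R) (hN : ∑ k, N k = 1) :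
    X.trace = ∑ k, ((X - c k • A k) * N k).trace + ∑ k, c k * (A k * N k).trace := by
  conv_lhs => rw [← Matrix.mul_one X, ← hN, Matrix.mul_sum, trace_sum]
  rw [← Finset.sum_add_distrib]
  simp only [Matrix.sub_mul, Matrix.smul_mul, trace_sub, trace_smul, smul_eq_mul, sub_add_cancel]

variable {X : Matrix ι ι 𝕜} {c : κ → 𝕜} {A N : κ → Matrix ι ι 𝕜}

theorem sum_mul_trace_mul_le_trace (hN : ∑ k, N k = 1) (hNpsd : ∀ k, (N k).PosSemidef)
    (hX : ∀ k, (X - c k • A k).PosSemidef) :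
    ∑ k, c k * (A k * N k).trace ≤ X.trace := by
  rw [trace_eq_sum_trace_sub_smul_mul_add X c A N hN]
  exact le_add_of_nonneg_left (Finset.sum_nonneg fun k _ ↦ (hX k).trace_mul_nonneg (hNpsd k))

theorem sum_mul_trace_mul_eq_trace (hN : ∑ k, N k = 1)
    (hXN : ∀ k, (X - c k • A k) * N k = 0) :
    ∑ k, c k * (A k * N k).trace = X.trace := by
  simp [trace_eq_sum_trace_sub_smul_mul_add X c A N hN, hXN]

end Matrix

theorem stmt_0_general {n m : ℕ}
    (ρ : Fin m → Matrix (Fin n) (Fin n) ℂ) (p : Fin m → ℝ)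
    (Δ : Matrix (Fin n) (Fin n) ℂ)
    (β : ℝ)
    -- the candidate measurement
    (M0 : Matrix (Fin n) (Fin n) ℂ) (M : Fin m → Matrix (Fin n) (Fin n) ℂ)
    (hMsum : M0 + ∑ i, M i = 1)
    (hPI : (Δ * M0).trace = (β : ℂ))
    -- the dual certificate
    (X : Matrix (Fin n) (Fin n) ℂ) (δ : ℝ)
    (hfeas1 : ∀ i, (X - (p i : ℂ) • ρ i).PosSemidef)
    (hfeas2 : (X - (δ : ℂ) • Δ).PosSemidef)
    (hcs1 : ∀ i, (X - (p i : ℂ) • ρ i) * M i = 0)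
    (hcs2 : (X - (δ : ℂ) • Δ) * M0 = 0) :
    -- the candidate maximizes P_D among measurements with P_I = β
    ∀ (N0 : Matrix (Fin n) (Fin n) ℂ) (N : Fin m → Matrix (Fin n) (Fin n) ℂ),
      N0.PosSemidef → (∀ i, (N i).PosSemidef) → (N0 + ∑ i, N i = 1) →
      (Δ * N0).trace = (β : ℂ) →
      ∑ i, p i * ((ρ i * N i).trace).re ≤ ∑ i, p i * ((ρ i * M i).trace).re := by
  intro N0 N hN0 hN hNsum hNPI
  -- The inconclusive outcome is `none : Option (Fin m)`.
  have hle : δ * β + ∑ i, p i * (ρ i * N i).trace ≤ X.trace := by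
    simpa [Fintype.sum_option, hNPI] using sum_mul_trace_mul_le_trace
      (c := fun o : Option (Fin m) ↦ o.elim (δ : ℂ) (fun i ↦ p i))
      (A := fun o : Option (Fin m) ↦ o.elim Δ ρ) (N := fun o : Option (Fin m) ↦ o.elim N0 N)
      (by simpa [Fintype.sum_option] using hNsum)
      (by rintro (_ | i); exacts [hN0, hN i]) (by rintro (_ | i); exacts [hfeas2, hfeas1 i])
  have heq : δ * β + ∑ i, p i * (ρ i * M i).trace = X.trace := by
    simpa [Fintype.sum_option, hPI] using sum_mul_trace_mul_eq_trace
      (c := fun o : Option (Fin m) ↦ o.elim (δ : ℂ) (fun i ↦ p i))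
      (A := fun o : Option (Fin m) ↦ o.elim Δ ρ) (N := fun o : Option (Fin m) ↦ o.elim M0 M)
      (by simpa [Fintype.sum_option] using hMsum)
      (by rintro (_ | i); exacts [hcs2, hcs1 i])
  have hC : ∑ i, p i * (ρ i * N i).trace ≤ ∑ i, p i * (ρ i * M i).trace :=
    le_of_add_le_add_left (heq ▸ hle)
  simpa [Complex.re_sum] using (Complex.le_def.mp hC).1

/-- Sufficiency of the optimality conditions for the quantum detection problem
with inconclusive results. -/
theorem stmt_0 {n m : ℕ}
    (ρ : Fin m → Matrix (Fin n) (Fin n) ℂ) (p : Fin m → ℝ)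
    (hρpsd : ∀ i, (ρ i).PosSemidef) (hρtr : ∀ i, (ρ i).trace = 1)
    (hp : ∀ i, 0 < p i) (hpsum : ∑ i, p i = 1)
    (Δ : Matrix (Fin n) (Fin n) ℂ) (hΔ : Δ = ∑ i, (p i : ℂ) • ρ i)
    (β : ℝ)
    -- the candidate measurement
    (M0 : Matrix (Fin n) (Fin n) ℂ) (M : Fin m → Matrix (Fin n) (Fin n) ℂ)
    (hM0 : M0.PosSemidef) (hM : ∀ i, (M i).PosSemidef)
    (hMsum : M0 + ∑ i, M i = 1)
    (hPI : (Δ * M0).trace = (β : ℂ))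
    -- the dual certificate
    (X : Matrix (Fin n) (Fin n) ℂ) (hX : X.IsHermitian) (δ : ℝ)
    (hfeas1 : ∀ i, (X - (p i : ℂ) • ρ i).PosSemidef)
    (hfeas2 : (X - (δ : ℂ) • Δ).PosSemidef)
    (hcs1 : ∀ i, (X - (p i : ℂ) • ρ i) * M i = 0)
    (hcs2 : (X - (δ : ℂ) • Δ) * M0 = 0) :
    -- the candidate maximizes P_D among measurements with P_I = β
    ∀ (N0 : Matrix (Fin n) (Fin n) ℂ) (N : Fin m → Matrix (Fin n) (Fin n) ℂ),
      N0.PosSemidef → (∀ i, (N i).PosSemidef) → (N0 + ∑ i, N i = 1) →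
      (Δ * N0).trace = (β : ℂ) →
      ∑ i, p i * ((ρ i * N i).trace).re ≤ ∑ i, p i * ((ρ i * M i).trace).re :=
  stmt_0_general ρ p Δ β M0 M hMsum hPI X δ hfeas1 hfeas2 hcs1 hcs2
end

section
/- Weak duality: Let X be a Hermitian n×n matrix and δ a real number such that X − p_i ρ_i is positive semidefinite for every 1 ≤ i ≤ m and X − δΔ is positive semidefinite. Then for every measurement {Π_i}_{i=0}^m, Tr(X) − δ·P_I({Π_i}) − P_D({Π_i}) = Σ_{i=1}^m Tr(Π_i(X − p_i ρ_i)) + Tr(Π_0(X − δΔ)) ≥ 0; in particular P_D({Π_i}) ≤ Tr(X) − δ·P_I({Π_i}). -/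
open Matrix BigOperators ComplexOrder

/- Each slack `X - pᵢρᵢ`, `X - δΔ` is positive semidefinite and pairs with a positive semidefinite
measurement operator, so every term of the slack sum has nonnegative trace; the slack sum itself
expands to `Tr X - δ P_I - P_D` because the measurement operators sum to the identity. -/

section

variable {n 𝕜 : Type*} [Fintype n] [RCLike 𝕜]

open scoped MatrixOrder in
theorem Matrix.PosSemidef.trace_mul_nonneg_s1 {A B : Matrix n n 𝕜} (hA : A.PosSemidef)
    (hB : B.PosSemidef) : 0 ≤ (A * B).trace := by
  classical
  set S := CFC.sqrt A
  have hS : Sᴴ = S := (CFC.sqrt_nonneg A).posSemidef.isHermitian.eq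
  have hSS : S * S = A := CFC.sqrt_mul_sqrt_self A hA.nonneg
  calc (0 : 𝕜) ≤ (S * B * Sᴴ).trace := (hB.mul_mul_conjTranspose_same S).trace_nonneg
    _ = (A * B).trace := by rw [hS, trace_mul_comm, ← mul_assoc, hSS]

theorem Matrix.PosSemidef.re_trace_mul_nonneg {A B : Matrix n n 𝕜} (hA : A.PosSemidef)
    (hB : B.PosSemidef) : 0 ≤ RCLike.re (A * B).trace :=
  (RCLike.nonneg_iff.mp (hA.trace_mul_nonneg_s1 hB)).1

end

theorem Matrix.trace_slack_eq_of_add_sum_eq_one {n ι R : Type*} [Fintype n] [DecidableEq n]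
    [Fintype ι] [CommRing R] (X Δ M₀ : Matrix n n R) (ρ M : ι → Matrix n n R) (c : ι → R) (d : R)
    (hM : M₀ + ∑ i, M i = 1) :
    ∑ i, (M i * (X - c i • ρ i)).trace + (M₀ * (X - d • Δ)).trace
      = X.trace - d * (Δ * M₀).trace - ∑ i, c i * (ρ i * M i).trace := by
  have hX : ∑ i, (M i * X).trace + (M₀ * X).trace = X.trace := by
    rw [← trace_sum, ← trace_add, ← Finset.sum_mul, ← add_mul, add_comm, hM, one_mul]
  simp only [mul_sub, Matrix.mul_smul, trace_sub, trace_smul, smul_eq_mul, Finset.sum_sub_distrib,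
    trace_mul_comm (M _) (ρ _), trace_mul_comm M₀ Δ]
  linear_combination hX

theorem stmt_1_general {n m : ℕ}
    (ρ : Fin m → Matrix (Fin n) (Fin n) ℂ) (p : Fin m → ℝ)
    (Δ : Matrix (Fin n) (Fin n) ℂ)
    -- the dual feasible point
    (X : Matrix (Fin n) (Fin n) ℂ) (δ : ℝ)
    (hfeas1 : ∀ i, (X - (p i : ℂ) • ρ i).PosSemidef)
    (hfeas2 : (X - (δ : ℂ) • Δ).PosSemidef)
    -- an arbitrary measurement
    (M0 : Matrix (Fin n) (Fin n) ℂ) (M : Fin m → Matrix (Fin n) (Fin n) ℂ)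
    (hM0 : M0.PosSemidef) (hM : ∀ i, (M i).PosSemidef)
    (hMsum : M0 + ∑ i, M i = 1) :
    X.trace.re - δ * ((Δ * M0).trace).re - ∑ i, p i * ((ρ i * M i).trace).re
      = ∑ i, ((M i * (X - (p i : ℂ) • ρ i)).trace).re
          + ((M0 * (X - (δ : ℂ) • Δ)).trace).re ∧
    0 ≤ ∑ i, ((M i * (X - (p i : ℂ) • ρ i)).trace).re
          + ((M0 * (X - (δ : ℂ) • Δ)).trace).re ∧
    ∑ i, p i * ((ρ i * M i).trace).re ≤ X.trace.re - δ * ((Δ * M0).trace).re := by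
  have hslack := congrArg Complex.re
    (trace_slack_eq_of_add_sum_eq_one X Δ M0 ρ M (fun i ↦ (p i : ℂ)) δ hMsum)
  simp only [Complex.add_re, Complex.sub_re, Complex.re_sum, Complex.re_ofReal_mul] at hslack
  have hnonneg : 0 ≤ ∑ i, ((M i * (X - (p i : ℂ) • ρ i)).trace).re
      + ((M0 * (X - (δ : ℂ) • Δ)).trace).re :=
    add_nonneg (Finset.sum_nonneg fun i _ ↦ (hM i).re_trace_mul_nonneg (hfeas1 i))
      (hM0.re_trace_mul_nonneg hfeas2)
  exact ⟨hslack.symm, hnonneg, by linarith⟩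

/-- Weak duality for the quantum detection problem with inconclusive results. -/
theorem stmt_1 {n m : ℕ}
    (ρ : Fin m → Matrix (Fin n) (Fin n) ℂ) (p : Fin m → ℝ)
    (hρpsd : ∀ i, (ρ i).PosSemidef) (hρtr : ∀ i, (ρ i).trace = 1)
    (hp : ∀ i, 0 < p i) (hpsum : ∑ i, p i = 1)
    (Δ : Matrix (Fin n) (Fin n) ℂ) (hΔ : Δ = ∑ i, (p i : ℂ) • ρ i)
    -- the dual feasible point
    (X : Matrix (Fin n) (Fin n) ℂ) (hX : X.IsHermitian) (δ : ℝ)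
    (hfeas1 : ∀ i, (X - (p i : ℂ) • ρ i).PosSemidef)
    (hfeas2 : (X - (δ : ℂ) • Δ).PosSemidef)
    -- an arbitrary measurement
    (M0 : Matrix (Fin n) (Fin n) ℂ) (M : Fin m → Matrix (Fin n) (Fin n) ℂ)
    (hM0 : M0.PosSemidef) (hM : ∀ i, (M i).PosSemidef)
    (hMsum : M0 + ∑ i, M i = 1) :
    X.trace.re - δ * ((Δ * M0).trace).re - ∑ i, p i * ((ρ i * M i).trace).re
      = ∑ i, ((M i * (X - (p i : ℂ) • ρ i)).trace).re
          + ((M0 * (X - (δ : ℂ) • Δ)).trace).re ∧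
    0 ≤ ∑ i, ((M i * (X - (p i : ℂ) • ρ i)).trace).re
          + ((M0 * (X - (δ : ℂ) • Δ)).trace).re ∧
    ∑ i, p i * ((ρ i * M i).trace).re ≤ X.trace.re - δ * ((Δ * M0).trace).re :=
  stmt_1_general ρ p Δ X δ hfeas1 hfeas2 M0 M hM0 hM hMsum
end

section
/- Structure and validity of the scaled inverse measurement: With the SIM operators as defined, Σ_{i=1}^m μ_i μ_i^* = γ² Δ^{-1}, so Σ_0 = I − γ² Δ^{-1}; moreover the family {Σ_i}_{i=0}^m is a measurement (i.e., Σ_0 is positive semidefinite) if and only if γ² ≤ λ_min, where λ_min is the smallest eigenvalue of Δ. -/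
open Matrix BigOperators ComplexOrder

/-!
Since `ψ i * (ψ i)ᴴ = p i • ρ i`, the average state is `Δ = ∑ ψ i * (ψ i)ᴴ`; hence
`∑ μ i * (μ i)ᴴ = γ² • Δ⁻¹ * Δ * Δ⁻¹ = γ² • Δ⁻¹`. Being such a sum and invertible, `Δ` is positive
definite, and `1 - γ² • Δ⁻¹` is the continuous functional calculus of `x ↦ 1 - γ² / x` at `Δ`.
So it is positive semidefinite iff `γ² ≤ λ` for every (positive) eigenvalue `λ` of `Δ`,
i.e. iff `γ² ≤ λ_min`.
-/

namespace Matrix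

variable {n 𝕜 : Type*} [RCLike 𝕜]

lemma real_smul_mul_conjTranspose_real_smul {k : Type*} [Fintype k] (r : ℝ)
    (M : Matrix n k 𝕜) : (r • M) * (r • M)ᴴ = r ^ 2 • (M * Mᴴ) := by
  rw [conjTranspose_smul, star_trivial, Matrix.smul_mul, Matrix.mul_smul, smul_smul, sq]

variable [Fintype n] [DecidableEq n] {ι : Type*} [Fintype ι] {κ : ι → Type*} [∀ i, Fintype (κ i)]

lemma posDef_sum_mul_conjTranspose (ψ : ∀ i, Matrix n (κ i) 𝕜)
    (hdet : IsUnit (∑ i, ψ i * (ψ i)ᴴ).det) : (∑ i, ψ i * (ψ i)ᴴ).PosDef := by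
  have hpsd := posSemidef_sum Finset.univ fun i _ => posSemidef_self_mul_conjTranspose (ψ i)
  exact hpsd.posDef_iff_isUnit.mpr ((isUnit_iff_isUnit_det _).mpr hdet)

lemma sum_inv_mul_mul_conjTranspose_inv_mul (ψ : ∀ i, Matrix n (κ i) 𝕜) {Δ : Matrix n n 𝕜}
    (hΔ : ∑ i, ψ i * (ψ i)ᴴ = Δ) (hdet : IsUnit Δ.det) :
    ∑ i, (Δ⁻¹ * ψ i) * (Δ⁻¹ * ψ i)ᴴ = Δ⁻¹ := by
  have hΔH : Δᴴ = Δ := by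
    simp only [← hΔ, conjTranspose_sum, conjTranspose_mul, conjTranspose_conjTranspose]
  calc ∑ i, (Δ⁻¹ * ψ i) * (Δ⁻¹ * ψ i)ᴴ = Δ⁻¹ * (∑ i, ψ i * (ψ i)ᴴ) * (Δ⁻¹)ᴴ := by
        simp only [conjTranspose_mul, Finset.mul_sum, Finset.sum_mul, Matrix.mul_assoc]
    _ = Δ⁻¹ := by rw [hΔ, nonsing_inv_mul _ hdet, Matrix.one_mul, conjTranspose_nonsing_inv, hΔH]

open scoped MatrixOrder in
lemma PosDef.posSemidef_one_sub_smul_inv_iff {A : Matrix n n 𝕜} (hA : A.PosDef) (c : ℝ) :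
    (1 - c • A⁻¹).PosSemidef ↔ ∀ i, c ≤ hA.1.eigenvalues i := by
  have hsa : IsSelfAdjoint A := hA.1
  have hcont (f : ℝ → ℝ) : ContinuousOn f (spectrum ℝ A) := A.finite_real_spectrum.continuousOn f
  have hcfc : 1 - c • A⁻¹ = cfc (fun x : ℝ => 1 - c * x⁻¹) A := by
    rw [cfc_sub _ _ _ (hcont _) (hcont _), cfc_const_one ℝ A hsa, cfc_const_mul _ _ _ (hcont _),
      ← hA.isUnit.unit_spec, cfc_inv_id _ hsa, coe_units_inv]
  rw [hcfc, ← nonneg_iff_posSemidef, cfc_nonneg_iff _ _ (hcont _) hsa,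
    hA.1.spectrum_real_eq_range_eigenvalues, Set.forall_mem_range]
  refine forall_congr' fun i => ?_
  rw [sub_nonneg, ← div_eq_mul_inv, div_le_one (hA.eigenvalues_pos i)]

end Matrix

theorem stmt_5_general {n m : ℕ} {r : Fin m → ℕ}
    (φ : (i : Fin m) → Matrix (Fin n) (Fin (r i)) ℂ)
    (p : Fin m → ℝ) (hp : ∀ i, 0 < p i)
    (ρ : Fin m → Matrix (Fin n) (Fin n) ℂ) (hρ : ∀ i, ρ i = φ i * (φ i)ᴴ)
    (Δ : Matrix (Fin n) (Fin n) ℂ) (hΔ : Δ = ∑ i, (p i : ℂ) • ρ i)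
    (hΔinv : IsUnit Δ.det) (hΔH : Δ.IsHermitian)
    (lam : ℝ) (hlam : IsLeast (Set.range hΔH.eigenvalues) lam)
    (γ : ℝ)
    (ψ : (i : Fin m) → Matrix (Fin n) (Fin (r i)) ℂ)
    (hψ : ∀ i, ψ i = (Real.sqrt (p i) : ℂ) • φ i)
    (μ : (i : Fin m) → Matrix (Fin n) (Fin (r i)) ℂ)
    (hμ : ∀ i, μ i = (γ : ℂ) • (Δ⁻¹ * ψ i)) :
    (∑ i, μ i * (μ i)ᴴ = ((γ : ℂ)^2) • Δ⁻¹) ∧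
    ((1 - ∑ i, μ i * (μ i)ᴴ).PosSemidef ↔ γ^2 ≤ lam) := by
  have hψψ (i : Fin m) : ψ i * (ψ i)ᴴ = (p i : ℂ) • ρ i := by
    rw [hψ, Complex.coe_smul, real_smul_mul_conjTranspose_real_smul, Real.sq_sqrt (hp i).le, hρ,
      Complex.coe_smul]
  have hΔψ : ∑ i, ψ i * (ψ i)ᴴ = Δ := by simp only [hψψ, hΔ]
  have hsum : ∑ i, μ i * (μ i)ᴴ = ((γ : ℂ)^2) • Δ⁻¹ := by
    simp only [hμ, Complex.coe_smul, real_smul_mul_conjTranspose_real_smul, ← Finset.smul_sum,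
      sum_inv_mul_mul_conjTranspose_inv_mul ψ hΔψ hΔinv, ← Complex.ofReal_pow]
  have hΔpos : Δ.PosDef := hΔψ ▸ posDef_sum_mul_conjTranspose ψ (hΔψ ▸ hΔinv)
  refine ⟨hsum, ?_⟩
  rw [hsum, ← Complex.ofReal_pow, Complex.coe_smul, hΔpos.posSemidef_one_sub_smul_inv_iff,
    le_isGLB_iff hlam.isGLB, mem_lowerBounds, Set.forall_mem_range]

/-- Structure and validity of the scaled inverse measurement: the SIM operators
satisfy Σ_{i=1}^m μ_i μ_i^* = γ² Δ⁻¹ (so Σ₀ = I − γ² Δ⁻¹), and the family is a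
measurement (i.e. Σ₀ is positive semidefinite) iff γ² ≤ λ_min(Δ). -/
theorem stmt_5 {n m : ℕ} {r : Fin m → ℕ}
    (φ : (i : Fin m) → Matrix (Fin n) (Fin (r i)) ℂ)
    (p : Fin m → ℝ) (hp : ∀ i, 0 < p i) (hpsum : ∑ i, p i = 1)
    (ρ : Fin m → Matrix (Fin n) (Fin n) ℂ) (hρ : ∀ i, ρ i = φ i * (φ i)ᴴ)
    (hρtr : ∀ i, (ρ i).trace = 1)
    (Δ : Matrix (Fin n) (Fin n) ℂ) (hΔ : Δ = ∑ i, (p i : ℂ) • ρ i)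
    (hΔinv : IsUnit Δ.det) (hΔH : Δ.IsHermitian)
    (lam : ℝ) (hlam : IsLeast (Set.range hΔH.eigenvalues) lam)
    (γ : ℝ) (hγ : 0 < γ)
    (ψ : (i : Fin m) → Matrix (Fin n) (Fin (r i)) ℂ)
    (hψ : ∀ i, ψ i = (Real.sqrt (p i) : ℂ) • φ i)
    (μ : (i : Fin m) → Matrix (Fin n) (Fin (r i)) ℂ)
    (hμ : ∀ i, μ i = (γ : ℂ) • (Δ⁻¹ * ψ i)) :
    (∑ i, μ i * (μ i)ᴴ = ((γ : ℂ)^2) • Δ⁻¹) ∧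
    ((1 - ∑ i, μ i * (μ i)ᴴ).PosSemidef ↔ γ^2 ≤ lam) :=
  stmt_5_general φ p hp ρ hρ Δ hΔ hΔinv hΔH lam hlam γ ψ hψ μ hμ
end

section
/- Optimality of the SIM for linearly independent pure states: Let |φ_1⟩,…,|φ_n⟩ be unit vectors in ℂ^n with prior probabilities p_i > 0 summing to 1 such that the weighted vectors ψ_i = √(p_i)|φ_i⟩ are linearly independent (hence a basis of ℂ^n), and set ρ_i = |φ_i⟩⟨φ_i| and Δ = Σ_i ψ_i ψ_i^*. Let λ_min be the smallest eigenvalue of Δ and let β satisfy 1 − nλ_min ≤ β < 1. Then the SIM with γ = √((1−β)/n) is a measurement with P_I = β and satisfies P_D({Π_i}) ≤ P_D(SIM) for every measurement {Π_i}_{i=0}^n with P_I({Π_i}) = β. -/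
open Matrix BigOperators ComplexOrder

/-!
The weighted states ψ_i form a basis, so their frame operator Δ = Σ ψ_i ψ_i^* is positive definite
and the canonical dual frame Δ⁻¹ψ_i is biorthogonal to ψ. Hence the SIM elements are
Σ_i = γ² (Δ⁻¹ψ_i)(Δ⁻¹ψ_i)^*, whose sum is γ²Δ⁻¹; so Σ_0 = 1 - γ²Δ⁻¹ has eigenvalues
1 - γ²/λ ≥ 0 because γ² ≤ λ_min, and P_I(SIM) = Tr Δ - nγ² = β. Each Σ_i detects ψ_i with weight γ², so
P_D(SIM) = nγ² = 1 - β. Conversely, for any measurement with P_I = β, dropping the off-diagonal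
terms ψ_j^* Π_i ψ_j ≥ 0 gives P_D ≤ Σ_{i,j} ψ_j^* Π_i ψ_j = Tr(Δ(1 - Π_0)) = 1 - β.
-/

namespace Matrix

section FrameOperator

variable {𝕜 ι m : Type*} [RCLike 𝕜] [Fintype ι] [Fintype m]

def frameOperator (ψ : ι → m → 𝕜) : Matrix m m 𝕜 :=
  ∑ i, vecMulVec (ψ i) (star (ψ i))

omit [Fintype m] in
lemma frameOperator_eq_mul_conjTranspose (ψ : ι → m → 𝕜) :
    frameOperator ψ = (of ψ)ᵀ * (of ψ)ᵀᴴ := by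
  ext k l
  simp [frameOperator, mul_apply, vecMulVec_apply, sum_apply]

omit [Fintype ι] in
lemma star_dotProduct_mulVec_eq_mul_apply (ψ : ι → m → 𝕜) (M : Matrix m m 𝕜) (i j : ι) :
    star (ψ i) ⬝ᵥ (M *ᵥ ψ j) = ((of ψ)ᵀᴴ * M * (of ψ)ᵀ) i j := by
  simp only [dotProduct, mulVec, mul_apply, conjTranspose_apply, transpose_apply, of_apply,
    Pi.star_apply, Finset.mul_sum, Finset.sum_mul, mul_assoc]
  exact Finset.sum_comm

lemma trace_frameOperator_mul (ψ : ι → m → 𝕜) (M : Matrix m m 𝕜) :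
    trace (frameOperator ψ * M) = ∑ i, star (ψ i) ⬝ᵥ (M *ᵥ ψ i) := by
  simp only [frameOperator, Finset.sum_mul, trace_sum, vecMulVec_mul, trace_vecMulVec]
  refine Finset.sum_congr rfl fun i _ => ?_
  rw [dotProduct_comm, dotProduct_mulVec]

lemma frameOperator_mulVec {l : Type*} [Fintype l] (M : Matrix l m 𝕜) (ψ : ι → m → 𝕜) :
    frameOperator (fun i => M *ᵥ ψ i) = M * frameOperator ψ * Mᴴ := by
  rw [frameOperator, frameOperator, Matrix.mul_sum, Matrix.sum_mul]
  simp only [mul_vecMulVec, vecMulVec_mul, star_mulVec]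

omit [Fintype m] in
lemma frameOperator_smul (c : 𝕜) (ψ : ι → m → 𝕜) :
    frameOperator (fun i => c • ψ i) = (star c * c) • frameOperator ψ := by
  simp only [frameOperator, star_smul, smul_vecMulVec, vecMulVec_smul, Finset.smul_sum, smul_smul]

lemma star_smul_dotProduct_mulVec_smul (c : 𝕜) (v : m → 𝕜) (M : Matrix m m 𝕜) :
    star (c • v) ⬝ᵥ (M *ᵥ (c • v)) = star c * c * (star v ⬝ᵥ (M *ᵥ v)) := by
  rw [star_smul, mulVec_smul, smul_dotProduct, dotProduct_smul, smul_eq_mul, smul_eq_mul,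
    mul_assoc]

lemma star_sqrt_smul_dotProduct_mulVec_sqrt_smul {r : ℝ} (hr : 0 ≤ r) (v : m → 𝕜)
    (M : Matrix m m 𝕜) :
    star ((√r : 𝕜) • v) ⬝ᵥ (M *ᵥ ((√r : 𝕜) • v)) = r * (star v ⬝ᵥ (M *ᵥ v)) := by
  rw [star_smul_dotProduct_mulVec_smul, RCLike.star_def, RCLike.conj_ofReal, ← RCLike.ofReal_mul,
    Real.mul_self_sqrt hr]

lemma star_dotProduct_vecMulVec_mulVec (a b : m → 𝕜) :
    star a ⬝ᵥ (vecMulVec b (star b) *ᵥ a) = (star a ⬝ᵥ b) * (star b ⬝ᵥ a) := by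
  rw [vecMulVec_mulVec, op_smul_eq_smul, dotProduct_smul, smul_eq_mul, mul_comm]

lemma sum_re_dotProduct_mulVec_le [DecidableEq m] (ψ : ι → m → 𝕜) {N₀ : Matrix m m 𝕜}
    {N : ι → Matrix m m 𝕜} (hN : ∀ i, (N i).PosSemidef) (hsum : N₀ + ∑ i, N i = 1) :
    ∑ i, RCLike.re (star (ψ i) ⬝ᵥ (N i *ᵥ ψ i))
      ≤ RCLike.re (trace (frameOperator ψ)) - RCLike.re (trace (frameOperator ψ * N₀)) := by
  calc ∑ i, RCLike.re (star (ψ i) ⬝ᵥ (N i *ᵥ ψ i))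
      ≤ ∑ i, ∑ j, RCLike.re (star (ψ i) ⬝ᵥ (N j *ᵥ ψ i)) :=
        Finset.sum_le_sum fun i _ => Finset.single_le_sum
          (fun j _ => (hN j).re_dotProduct_nonneg (ψ i)) (Finset.mem_univ i)
    _ = RCLike.re (trace (frameOperator ψ * ∑ j, N j)) := by
        simp only [trace_frameOperator_mul, sum_mulVec, dotProduct_sum, map_sum]
    _ = _ := by
        rw [eq_sub_of_add_eq' hsum, Matrix.mul_sub, Matrix.mul_one, trace_sub, map_sub]

end FrameOperator

section DualFrame

variable {𝕜 m : Type*} [RCLike 𝕜] [Fintype m] [DecidableEq m] {ψ : m → m → 𝕜}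

noncomputable def dualFrame (ψ : m → m → 𝕜) (i : m) : m → 𝕜 :=
  (frameOperator ψ)⁻¹ *ᵥ ψ i

lemma posDef_frameOperator (hψ : LinearIndependent 𝕜 ψ) : (frameOperator ψ).PosDef := by
  have hB : IsUnit (of ψ) := linearIndependent_rows_iff_isUnit.mp hψ
  rw [frameOperator_eq_mul_conjTranspose]
  exact .mul_conjTranspose_self _ (vecMul_injective_iff_isUnit.mpr ((isUnit_transpose _).mpr hB))

lemma star_dotProduct_dualFrame (hψ : LinearIndependent 𝕜 ψ) (i j : m) :
    star (ψ i) ⬝ᵥ dualFrame ψ j = (1 : Matrix m m 𝕜) i j := by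
  -- With B the matrix whose columns are the ψ_i, Δ = B Bᴴ, hence Bᴴ Δ⁻¹ B = 1.
  have hB : IsUnit (of ψ)ᵀ.det := (isUnit_iff_isUnit_det _).mp
    ((isUnit_transpose _).mpr (linearIndependent_rows_iff_isUnit.mp hψ))
  have hBH : IsUnit (of ψ)ᵀᴴ.det := by rw [det_conjTranspose]; exact hB.star
  rw [dualFrame, star_dotProduct_mulVec_eq_mul_apply, frameOperator_eq_mul_conjTranspose,
    mul_inv_rev, ← Matrix.mul_assoc, mul_nonsing_inv _ hBH, Matrix.one_mul, nonsing_inv_mul _ hB]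

lemma frameOperator_dualFrame (hψ : LinearIndependent 𝕜 ψ) :
    frameOperator (dualFrame ψ) = (frameOperator ψ)⁻¹ := by
  have hΔ := posDef_frameOperator hψ
  unfold dualFrame
  rw [frameOperator_mulVec, hΔ.isHermitian.inv.eq,
    nonsing_inv_mul _ ((isUnit_iff_isUnit_det _).mp hΔ.isUnit), Matrix.one_mul]

lemma frameOperator_real_smul_dualFrame (hψ : LinearIndependent 𝕜 ψ) (c : ℝ) :
    frameOperator (fun i => (c : 𝕜) • dualFrame ψ i) = c ^ 2 • (frameOperator ψ)⁻¹ := by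
  rw [frameOperator_smul, frameOperator_dualFrame hψ, RCLike.star_def, RCLike.conj_ofReal,
    ← RCLike.ofReal_mul, ← sq, ← RCLike.real_smul_eq_coe_smul]

lemma star_dotProduct_vecMulVec_real_smul_dualFrame_mulVec (hψ : LinearIndependent 𝕜 ψ) (c : ℝ)
    (i : m) :
    star (ψ i) ⬝ᵥ (vecMulVec ((c : 𝕜) • dualFrame ψ i) (star ((c : 𝕜) • dualFrame ψ i)) *ᵥ ψ i)
      = (c ^ 2 : ℝ) := by
  rw [star_dotProduct_vecMulVec_mulVec, star_dotProduct ((c : 𝕜) • dualFrame ψ i),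
    dotProduct_smul, star_dotProduct_dualFrame hψ, one_apply_eq, smul_eq_mul, mul_one,
    RCLike.star_def, RCLike.conj_ofReal, RCLike.ofReal_pow, sq]

end DualFrame

open scoped MatrixOrder in
lemma PosDef.posSemidef_one_sub_smul_inv {𝕜 m : Type*} [RCLike 𝕜] [Fintype m] [DecidableEq m]
    {A : Matrix m m 𝕜} (hA : A.PosDef) {c : ℝ} (hc : ∀ i, c ≤ hA.isHermitian.eigenvalues i) :
    (1 - c • A⁻¹).PosSemidef := by
  have hcont : ∀ f : ℝ → ℝ, ContinuousOn f (spectrum ℝ A) :=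
    fun f => A.finite_real_spectrum.continuousOn f
  have hcfc : cfc (fun x : ℝ => 1 - c * x⁻¹) A = 1 - c • A⁻¹ := by
    rw [cfc_sub (fun _ => 1) (fun x => c * x⁻¹) A (hcont _) (hcont _), cfc_const_one ℝ A,
      cfc_const_mul c (fun x : ℝ => x⁻¹) A (hcont _), cfc_ringInverse_id A hA.isUnit,
      ← nonsing_inv_eq_ringInverse]
  rw [← nonneg_iff_posSemidef, ← hcfc]
  refine cfc_nonneg fun x hx => ?_
  rw [hA.isHermitian.spectrum_real_eq_range_eigenvalues] at hx
  obtain ⟨i, rfl⟩ := hx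
  have : c * (hA.isHermitian.eigenvalues i)⁻¹ ≤ 1 := by
    rw [mul_inv_le_iff₀ (hA.eigenvalues_pos i)]; linarith [hc i]
  linarith

end Matrix

/-- Optimality of the SIM for linearly independent pure states: for unit
vectors φ_i with priors p_i such that the weighted vectors ψ_i = √p_i φ_i are
linearly independent, and 1 − nλ_min ≤ β < 1, the SIM with γ = √((1−β)/n) is a
measurement with P_I = β maximizing P_D among measurements with P_I = β. -/
theorem stmt_10 {n : ℕ}
    (φ : Fin n → (Fin n → ℂ)) (hunit : ∀ i, star (φ i) ⬝ᵥ φ i = 1)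
    (p : Fin n → ℝ) (hp : ∀ i, 0 < p i) (hpsum : ∑ i, p i = 1)
    (ψ : Fin n → (Fin n → ℂ)) (hψ : ∀ i, ψ i = (Real.sqrt (p i) : ℂ) • φ i)
    (hind : LinearIndependent ℂ ψ)
    (Δ : Matrix (Fin n) (Fin n) ℂ)
    (hΔ : Δ = ∑ i, Matrix.vecMulVec (ψ i) (star (ψ i)))
    (hΔH : Δ.IsHermitian)
    (lam : ℝ) (hlam : IsLeast (Set.range hΔH.eigenvalues) lam)
    (β : ℝ) (hβ1 : 1 - (n : ℝ) * lam ≤ β) (hβ2 : β < 1)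
    (γ : ℝ) (hγ : γ = Real.sqrt ((1 - β) / n))
    (μ : Fin n → (Fin n → ℂ)) (hμ : ∀ i, μ i = (γ : ℂ) • (Δ⁻¹ *ᵥ ψ i))
    (S : Fin n → Matrix (Fin n) (Fin n) ℂ)
    (hS : ∀ i, S i = Matrix.vecMulVec (μ i) (star (μ i)))
    (S0 : Matrix (Fin n) (Fin n) ℂ) (hS0 : S0 = 1 - ∑ i, S i) :
    S0.PosSemidef ∧ (Δ * S0).trace = (β : ℂ) ∧
    ∀ (N0 : Matrix (Fin n) (Fin n) ℂ) (N : Fin n → Matrix (Fin n) (Fin n) ℂ),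
      N0.PosSemidef → (∀ i, (N i).PosSemidef) → (N0 + ∑ i, N i = 1) →
      (Δ * N0).trace = (β : ℂ) →
      ∑ i, p i * (star (φ i) ⬝ᵥ (N i *ᵥ φ i)).re
        ≤ ∑ i, p i * (star (φ i) ⬝ᵥ (S i *ᵥ φ i)).re := by
  obtain ⟨i0, -⟩ := hlam.1
  have hn : (0 : ℝ) < n := Nat.cast_pos.mpr i0.pos
  have hγsq : γ ^ 2 = (1 - β) / n := by rw [hγ, Real.sq_sqrt (div_nonneg (by linarith) hn.le)]
  have hnγ : (n : ℝ) * γ ^ 2 = 1 - β := by rw [hγsq]; field_simp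
  have hΔψ : Δ = frameOperator ψ := hΔ
  have hΔpd : Δ.PosDef := hΔψ ▸ posDef_frameOperator hind
  have hquad : ∀ M i, star (ψ i) ⬝ᵥ (M *ᵥ ψ i) = p i * (star (φ i) ⬝ᵥ (M *ᵥ φ i)) := by
    intro M i; rw [hψ]; exact star_sqrt_smul_dotProduct_mulVec_sqrt_smul (hp i).le _ _
  have htrΔ : Δ.trace = 1 := by
    rw [← Matrix.mul_one Δ, hΔψ, trace_frameOperator_mul, Finset.sum_congr rfl fun i _ => hquad 1 i]
    simp only [one_mulVec, hunit, mul_one]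
    exact_mod_cast hpsum
  have hS' : S = fun i => vecMulVec ((γ : ℂ) • dualFrame ψ i) (star ((γ : ℂ) • dualFrame ψ i)) := by
    ext1 i; rw [hS, hμ, hΔψ, dualFrame]
  have hSsum : ∑ i, S i = γ ^ 2 • Δ⁻¹ := by
    rw [hS', hΔψ]; exact frameOperator_real_smul_dualFrame hind γ
  refine ⟨?_, ?_, ?_⟩
  · rw [hS0, hSsum]
    refine hΔpd.posSemidef_one_sub_smul_inv fun i => le_trans ?_ (hlam.2 ⟨i, rfl⟩)
    rw [hγsq, div_le_iff₀ hn]; linarith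
  · rw [hS0, hSsum, Matrix.mul_sub, Matrix.mul_one, Matrix.mul_smul,
      mul_nonsing_inv _ ((isUnit_iff_isUnit_det _).mp hΔpd.isUnit), trace_sub, trace_smul,
      trace_one, htrΔ, Fintype.card_fin, Complex.real_smul]
    have := congrArg (fun x : ℝ => (x : ℂ)) hnγ
    push_cast at this ⊢
    linear_combination -this
  · intro N0 N _ hN hsum htr
    have hSψ : ∀ i, star (ψ i) ⬝ᵥ (S i *ᵥ ψ i) = (γ ^ 2 : ℝ) := by
      intro i; rw [hS']; exact star_dotProduct_vecMulVec_real_smul_dualFrame_mulVec hind γ i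
    simp only [← Complex.re_ofReal_mul, ← hquad, hSψ, Complex.ofReal_re, Finset.sum_const,
      Finset.card_univ, Fintype.card_fin, nsmul_eq_mul, hnγ]
    have := sum_re_dotProduct_mulVec_le ψ hN hsum
    rw [← hΔψ, htrΔ, htr] at this
    simpa using this
end

section
/- The SIM of a geometrically uniform state set is geometrically uniform: for a GU state set with Δ invertible, Δ (and hence Δ^{-1}) commutes with every U_i ∈ G, and the SIM factors μ_i = γ Δ^{-1} ψ_i (with ψ_i = (1/√m)φ_i) satisfy μ_i = U_i μ for all 1 ≤ i ≤ m, where μ = γ Δ^{-1}((1/√m)φ). Consequently the SIM operators satisfy Σ_i = U_i (μμ^*) U_i^* for all i. -/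
open Matrix BigOperators ComplexOrder

/-- The SIM of a geometrically uniform state set is geometrically uniform:
Δ (hence Δ⁻¹) commutes with every U_i in the generating group, the SIM factors
satisfy μ_i = U_i μ where μ = γΔ⁻¹((1/√m)φ), and the SIM operators satisfy
Σ_i = U_i (μμ^*) U_i^*. -/
theorem stmt_11 {n m s : ℕ} (hm : 0 < m)
    (U : Fin m → Matrix (Fin n) (Fin n) ℂ)
    (hUunit : ∀ i, U i * (U i)ᴴ = 1)
    (hUinj : Function.Injective U)
    (hU1 : U ⟨0, hm⟩ = 1)
    (hUmul : ∀ i j, ∃ k, U i * U j = U k)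
    (hUinv : ∀ i, ∃ j, (U i)ᴴ = U j)
    (φ : Matrix (Fin n) (Fin s) ℂ) (hφtr : (φ * φᴴ).trace = 1)
    (Δ : Matrix (Fin n) (Fin n) ℂ)
    (hΔ : Δ = (1 / (m : ℂ)) • ∑ i, U i * (φ * φᴴ) * (U i)ᴴ)
    (hΔinv : IsUnit Δ.det)
    (γ : ℝ) (hγ : 0 < γ)
    (ψ : Fin m → Matrix (Fin n) (Fin s) ℂ)
    (hψ : ∀ i, ψ i = (Real.sqrt (1 / m) : ℂ) • (U i * φ))
    (μ : Fin m → Matrix (Fin n) (Fin s) ℂ)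
    (hμ : ∀ i, μ i = (γ : ℂ) • (Δ⁻¹ * ψ i))
    (μgen : Matrix (Fin n) (Fin s) ℂ)
    (hμgen : μgen = (γ : ℂ) • (Δ⁻¹ * ((Real.sqrt (1 / m) : ℂ) • φ))) :
    (∀ i, Δ * U i = U i * Δ) ∧
    (∀ i, Δ⁻¹ * U i = U i * Δ⁻¹) ∧
    (∀ i, μ i = U i * μgen) ∧
    (∀ i, μ i * (μ i)ᴴ = U i * (μgen * μgenᴴ) * (U i)ᴴ) := by
  have hU' : ∀ i, (U i)ᴴ * U i = 1 := fun i => mul_eq_one_comm.mp (hUunit i)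
  have key : ∀ i, U i * Δ * (U i)ᴴ = Δ := by
    intro i
    obtain ⟨f, hf⟩ := Classical.axiomOfChoice (hUmul i)
    have hfinj : Function.Injective f := by
      intro a b hab
      apply hUinj
      have : U i * U a = U i * U b := by rw [hf a, hf b, hab]
      calc U a = (U i)ᴴ * (U i * U a) := by rw [← Matrix.mul_assoc, hU' i, Matrix.one_mul]
        _ = (U i)ᴴ * (U i * U b) := by rw [this]
        _ = U b := by rw [← Matrix.mul_assoc, hU' i, Matrix.one_mul]
    have hbij : Function.Bijective f := Finite.injective_iff_bijective.mp hfinj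
    rw [hΔ, Matrix.mul_smul, Matrix.smul_mul]
    congr 1
    rw [Finset.mul_sum, Finset.sum_mul]
    calc ∑ j, U i * (U j * (φ * φᴴ) * (U j)ᴴ) * (U i)ᴴ
        = ∑ j, U (f j) * (φ * φᴴ) * (U (f j))ᴴ := by
          refine Finset.sum_congr rfl fun j _ => ?_
          rw [← hf j, Matrix.conjTranspose_mul]
          simp only [Matrix.mul_assoc]
      _ = ∑ k, U k * (φ * φᴴ) * (U k)ᴴ :=
          Function.Bijective.sum_comp hbij (fun k => U k * (φ * φᴴ) * (U k)ᴴ)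
  have hcomm : ∀ i, Δ * U i = U i * Δ := by
    intro i
    calc Δ * U i = (U i * Δ * (U i)ᴴ) * U i := by rw [key i]
      _ = U i * Δ * ((U i)ᴴ * U i) := by simp only [Matrix.mul_assoc]
      _ = U i * Δ := by rw [hU' i, Matrix.mul_one]
  have h1 : Δ * Δ⁻¹ = 1 := Matrix.mul_nonsing_inv _ hΔinv
  have h2 : Δ⁻¹ * Δ = 1 := Matrix.nonsing_inv_mul _ hΔinv
  have hcomminv : ∀ i, Δ⁻¹ * U i = U i * Δ⁻¹ := by
    intro i
    calc Δ⁻¹ * U i = Δ⁻¹ * U i * (Δ * Δ⁻¹) := by rw [h1, Matrix.mul_one]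
      _ = Δ⁻¹ * (U i * Δ) * Δ⁻¹ := by simp only [Matrix.mul_assoc]
      _ = Δ⁻¹ * (Δ * U i) * Δ⁻¹ := by rw [hcomm i]
      _ = (Δ⁻¹ * Δ) * (U i * Δ⁻¹) := by simp only [Matrix.mul_assoc]
      _ = U i * Δ⁻¹ := by rw [h2, Matrix.one_mul]
  have hμU : ∀ i, μ i = U i * μgen := by
    intro i
    rw [hμ i, hψ i, hμgen]
    rw [Matrix.mul_smul, Matrix.mul_smul, ← Matrix.mul_assoc, hcomminv i,
      Matrix.mul_assoc]
    rw [Matrix.mul_smul, Matrix.mul_smul]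
  refine ⟨hcomm, hcomminv, hμU, fun i => ?_⟩
  rw [hμU i, Matrix.conjTranspose_mul]
  simp only [Matrix.mul_assoc]
end

section
/- Optimality of the SIM for GU state sets (Theorem 2, part 3): Let {ρ_i = U_i ρ U_i^*} be a GU state set with generator ρ = φφ^*, let Φ be the matrix with block columns φ_i = U_i φ (so ΦΦ^* = mΔ, assumed invertible), and let λ_min be the smallest eigenvalue of Δ. If φ^*(ΦΦ^*)^{-1}φ = α I_r for some constant α, then for every β with 1 − nλ_min ≤ β < 1, the SIM with γ = √((1−β)/n) is a measurement with P_I = β and maximizes P_D among all measurements with P_I = β. -/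
open Matrix BigOperators ComplexOrder

private lemma psd_sum {ι : Type*} [Fintype ι] {k : ℕ} (f : ι → Matrix (Fin k) (Fin k) ℂ)
    (h : ∀ i, (f i).PosSemidef) : (∑ i, f i).PosSemidef := by
  classical
  refine Finset.sum_induction f _ (fun a b ha hb => ha.add hb) Matrix.PosSemidef.zero
    (fun i _ => h i)

private lemma psd_diag_nonneg {k : ℕ} {A : Matrix (Fin k) (Fin k) ℂ} (hA : A.PosSemidef)
    (i : Fin k) : 0 ≤ A i i := by
  exact hA.diag_nonneg

private lemma psd_trace_nonneg {k : ℕ} {A : Matrix (Fin k) (Fin k) ℂ} (hA : A.PosSemidef) :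
    0 ≤ A.trace :=
  Finset.sum_nonneg fun i _ => psd_diag_nonneg hA i

open scoped MatrixOrder in
private lemma psd_sqrt_exists {k : ℕ} {A : Matrix (Fin k) (Fin k) ℂ} (hA : A.PosSemidef) :
    ∃ T : Matrix (Fin k) (Fin k) ℂ, T * T = A ∧ Tᴴ = T ∧ T.PosSemidef :=
  ⟨CFC.sqrt A, CFC.sqrt_mul_sqrt_self A hA.nonneg, (CFC.sqrt_nonneg A).posSemidef.isHermitian,
    (CFC.sqrt_nonneg A).posSemidef⟩

private lemma psd_trace_mul_re_nonneg {k : ℕ} {A B : Matrix (Fin k) (Fin k) ℂ}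
    (hA : A.PosSemidef) (hB : B.PosSemidef) : 0 ≤ ((A * B).trace).re := by
  obtain ⟨T, hTT0, hTH0, -⟩ := psd_sqrt_exists hA
  have hTT : T * T = A := hTT0
  have hTH : Tᴴ = T := hTH0
  have h1 : (A * B).trace = (T * B * Tᴴ).trace := by
    rw [hTH, ← hTT, Matrix.mul_assoc, Matrix.trace_mul_comm T (T * B), Matrix.mul_assoc]
  rw [h1]
  have := psd_trace_nonneg (hB.mul_mul_conjTranspose_same T)
  exact (Complex.le_def.mp this).1

set_option maxHeartbeats 2000000 in
/-- Optimality of the SIM for GU state sets (Theorem 2, part 3): if the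
generator satisfies φ^*(ΦΦ^*)⁻¹φ = αI (with ΦΦ^* = mΔ), then for every β with
1 − nλ_min ≤ β < 1 the SIM with γ = √((1−β)/n) is a measurement with P_I = β
that maximizes P_D among all measurements with P_I = β. -/
theorem stmt_12 {n m s : ℕ} (hm : 0 < m)
    (U : Fin m → Matrix (Fin n) (Fin n) ℂ)
    (hUunit : ∀ i, U i * (U i)ᴴ = 1)
    (hUinj : Function.Injective U)
    (hU1 : U ⟨0, hm⟩ = 1)
    (hUmul : ∀ i j, ∃ k, U i * U j = U k)
    (hUinv : ∀ i, ∃ j, (U i)ᴴ = U j)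
    (φ : Matrix (Fin n) (Fin s) ℂ) (hφtr : (φ * φᴴ).trace = 1)
    (ρ : Fin m → Matrix (Fin n) (Fin n) ℂ)
    (hρ : ∀ i, ρ i = U i * (φ * φᴴ) * (U i)ᴴ)
    (Δ : Matrix (Fin n) (Fin n) ℂ)
    (hΔ : Δ = (1 / (m : ℂ)) • ∑ i, ρ i)
    (hΔinv : IsUnit Δ.det) (hΔH : Δ.IsHermitian)
    (lam : ℝ) (hlam : IsLeast (Set.range hΔH.eigenvalues) lam)
    (α : ℝ) (hα : φᴴ * ((m : ℂ) • Δ)⁻¹ * φ = (α : ℂ) • 1)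
    (β : ℝ) (hβ1 : 1 - (n : ℝ) * lam ≤ β) (hβ2 : β < 1)
    (γ : ℝ) (hγ : γ = Real.sqrt ((1 - β) / n))
    (ψ : Fin m → Matrix (Fin n) (Fin s) ℂ)
    (hψ : ∀ i, ψ i = (Real.sqrt (1 / m) : ℂ) • (U i * φ))
    (μ : Fin m → Matrix (Fin n) (Fin s) ℂ)
    (hμ : ∀ i, μ i = (γ : ℂ) • (Δ⁻¹ * ψ i)) :
    (1 - ∑ i, μ i * (μ i)ᴴ).PosSemidef ∧
    (Δ * (1 - ∑ i, μ i * (μ i)ᴴ)).trace = (β : ℂ) ∧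
    ∀ (N0 : Matrix (Fin n) (Fin n) ℂ) (N : Fin m → Matrix (Fin n) (Fin n) ℂ),
      N0.PosSemidef → (∀ i, (N i).PosSemidef) → (N0 + ∑ i, N i = 1) →
      (Δ * N0).trace = (β : ℂ) →
      (1 / m : ℝ) * ∑ i, ((ρ i * N i).trace).re
        ≤ (1 / m : ℝ) * ∑ i, ((ρ i * (μ i * (μ i)ᴴ)).trace).re := by
  classical
  -- basic facts
  have hn : 0 < n := by
    rcases Nat.eq_zero_or_pos n with h | h
    · subst h; simp [Matrix.trace] at hφtr
    · exact h
  have hs : 0 < s := by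
    rcases Nat.eq_zero_or_pos s with h | h
    · subst h; simp [Matrix.trace, Matrix.diag, Matrix.mul_apply] at hφtr
    · exact h
  have hm0 : (m : ℂ) ≠ 0 := Nat.cast_ne_zero.mpr hm.ne'
  have hn0 : (n : ℝ) ≠ 0 := Nat.cast_ne_zero.mpr hn.ne'
  have hUU : ∀ i, (U i)ᴴ * U i = 1 := fun i => mul_eq_one_comm.mp (hUunit i)
  -- ψψᴴ = (1/m) ρ
  have hc : ((Real.sqrt (1 / m) : ℝ) : ℂ) * ((Real.sqrt (1 / m) : ℝ) : ℂ) = 1 / (m : ℂ) := by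
    rw [← Complex.ofReal_mul, Real.mul_self_sqrt (by positivity)]
    push_cast; ring
  have hψψ : ∀ i, ψ i * (ψ i)ᴴ = (1 / (m : ℂ)) • ρ i := by
    intro i
    rw [hψ i, hρ i, Matrix.conjTranspose_smul, RCLike.star_def, Complex.conj_ofReal,
      Matrix.smul_mul, Matrix.mul_smul, smul_smul, hc]
    congr 1
    rw [Matrix.conjTranspose_mul]
    simp only [Matrix.mul_assoc]
  have hρψ : ∀ i, ρ i = (m : ℂ) • (ψ i * (ψ i)ᴴ) := by
    intro i
    rw [hψψ i, smul_smul]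
    field_simp
    rw [one_smul]
  have hsumψ : ∑ i, ψ i * (ψ i)ᴴ = Δ := by
    rw [hΔ, Finset.smul_sum]
    exact Finset.sum_congr rfl fun i _ => hψψ i
  have hρtr : ∀ i, (ρ i).trace = 1 := by
    intro i
    rw [hρ i, Matrix.trace_mul_cycle, ← Matrix.mul_assoc, hUU i, Matrix.one_mul, hφtr]
  have hTrΔ : Δ.trace = 1 := by
    rw [hΔ, Matrix.trace_smul, Matrix.trace_sum]
    simp only [hρtr, Finset.sum_const, Finset.card_univ, Fintype.card_fin, nsmul_eq_mul,
      mul_one, smul_eq_mul]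
    field_simp
  -- group invariance
  have hinvΔ : ∀ i, U i * Δ * (U i)ᴴ = Δ := by
    intro i
    have hσ : ∀ j, U i * U j = U (Classical.choose (hUmul i j)) := fun j =>
      Classical.choose_spec (hUmul i j)
    set σ : Fin m → Fin m := fun j => Classical.choose (hUmul i j) with hσdef
    have hσinj : Function.Injective σ := by
      intro a b hab
      have h1 : U i * U a = U i * U b := by rw [hσ a, hσ b]; exact congrArg U hab
      have h2 : (U i)ᴴ * (U i * U a) = (U i)ᴴ * (U i * U b) := by rw [h1]
      rw [← Matrix.mul_assoc, ← Matrix.mul_assoc, hUU i, Matrix.one_mul, Matrix.one_mul] at h2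
      exact hUinj h2
    have hσbij : Function.Bijective σ := Finite.injective_iff_bijective.mp hσinj
    have hterm : ∀ j, U i * ρ j * (U i)ᴴ = ρ (σ j) := by
      intro j
      rw [hρ j, hρ (σ j), ← hσ j, Matrix.conjTranspose_mul]
      simp only [Matrix.mul_assoc]
    calc U i * Δ * (U i)ᴴ = (1 / (m : ℂ)) • ∑ j, (U i * ρ j * (U i)ᴴ) := by
          rw [hΔ, Matrix.mul_smul, Matrix.smul_mul, Matrix.mul_sum, Matrix.sum_mul]
      _ = (1 / (m : ℂ)) • ∑ j, ρ (σ j) := by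
          exact congrArg _ (Finset.sum_congr rfl fun j _ => hterm j)
      _ = Δ := by
          rw [Fintype.sum_bijective σ hσbij _ _ (fun j => rfl), ← hΔ]
  have hcommΔ : ∀ i, U i * Δ = Δ * U i := by
    intro i
    have := congrArg (fun X => X * U i) (hinvΔ i)
    simpa [Matrix.mul_assoc, hUU i] using this
  have hcommΔi : ∀ i, U i * Δ⁻¹ = Δ⁻¹ * U i := by
    intro i
    have h1 : Δ⁻¹ * (U i * Δ) * Δ⁻¹ = Δ⁻¹ * (Δ * U i) * Δ⁻¹ := by rw [hcommΔ i]
    simp only [Matrix.mul_assoc] at h1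
    rw [Matrix.mul_nonsing_inv _ hΔinv, Matrix.mul_one] at h1
    rw [Matrix.nonsing_inv_mul_cancel_left _ _ hΔinv] at h1
    exact h1.symm
  have hUinvΔ : ∀ i, (U i)ᴴ * Δ⁻¹ * U i = Δ⁻¹ := by
    intro i
    rw [Matrix.mul_assoc, ← hcommΔi i, ← Matrix.mul_assoc, hUU i, Matrix.one_mul]
  have hΔiH : Δ⁻¹ᴴ = Δ⁻¹ := by rw [Matrix.conjTranspose_nonsing_inv, hΔH.eq]
  -- key identity ψᴴ Δ⁻¹ ψ = α • 1
  have hαm : φᴴ * Δ⁻¹ * φ = ((m : ℂ) * α) • 1 := by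
    have hsm : ((m : ℂ) • Δ)⁻¹ = (m : ℂ)⁻¹ • Δ⁻¹ := by
      apply Matrix.inv_eq_right_inv
      rw [Matrix.smul_mul, Matrix.mul_smul, smul_smul, Matrix.mul_nonsing_inv _ hΔinv,
        mul_inv_cancel₀ hm0, one_smul]
    rw [hsm] at hα
    have h2 := congrArg (fun X => (m : ℂ) • X) hα
    simp only [Matrix.mul_smul, Matrix.smul_mul, smul_smul, mul_inv_cancel₀ hm0, one_smul] at h2
    exact h2
  have hkey : ∀ i, (ψ i)ᴴ * Δ⁻¹ * ψ i = (α : ℂ) • 1 := by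
    intro i
    have e1 : (ψ i)ᴴ * Δ⁻¹ * ψ i = (1 / (m : ℂ)) • (φᴴ * ((U i)ᴴ * Δ⁻¹ * U i) * φ) := by
      rw [hψ i, Matrix.conjTranspose_smul, Matrix.conjTranspose_mul, RCLike.star_def,
        Complex.conj_ofReal, Matrix.smul_mul, Matrix.smul_mul, Matrix.mul_smul, smul_smul, hc]
      congr 1
      simp only [Matrix.mul_assoc]
    rw [e1, hUinvΔ i, hαm, smul_smul]
    congr 1
    field_simp
  -- m * α * s = n
  have hmαs : (m : ℝ) * (α * s) = n := by
    have h2 : ∑ i, ((ψ i)ᴴ * Δ⁻¹ * ψ i).trace = (n : ℂ) := by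
      have e : ∀ i, ((ψ i)ᴴ * Δ⁻¹ * ψ i).trace = (ψ i * (ψ i)ᴴ * Δ⁻¹).trace := fun i =>
        Matrix.trace_mul_cycle ((ψ i)ᴴ) Δ⁻¹ (ψ i)
      rw [Finset.sum_congr rfl fun i _ => e i, ← Matrix.trace_sum, ← Matrix.sum_mul, hsumψ,
        Matrix.mul_nonsing_inv _ hΔinv, Matrix.trace_one]
      simp
    have h3 : ∑ i, ((ψ i)ᴴ * Δ⁻¹ * ψ i).trace = (m : ℂ) * ((α : ℂ) * s) := by
      have e : ∀ i, ((ψ i)ᴴ * Δ⁻¹ * ψ i).trace = (α : ℂ) * s := by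
        intro i
        rw [hkey i, Matrix.trace_smul, Matrix.trace_one]
        simp
      rw [Finset.sum_congr rfl fun i _ => e i]
      simp [Finset.sum_const, mul_assoc]
    have h4 : (m : ℂ) * ((α : ℂ) * s) = (n : ℂ) := by rw [← h3, h2]
    exact_mod_cast h4
  have hαpos : 0 < α := by
    have hms : (0 : ℝ) < (m : ℝ) * (s : ℝ) := by positivity
    nlinarith [hmαs, (Nat.cast_pos (α := ℝ)).mpr hn]
  -- Δ PSD and its square root
  have hΔpsd : Δ.PosSemidef := by
    rw [← hsumψ]
    exact psd_sum _ fun i => Matrix.posSemidef_self_mul_conjTranspose (ψ i)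
  obtain ⟨S, hSS0, hSH0, -⟩ := psd_sqrt_exists hΔpsd
  have hSS : S * S = Δ := hSS0
  have hSH : Sᴴ = S := hSH0
  have hSdet : IsUnit S.det := by
    have h1 : IsUnit (S.det * S.det) := by rw [← Matrix.det_mul, hSS]; exact hΔinv
    exact isUnit_of_mul_isUnit_left h1
  have hSiS : S⁻¹ * S = 1 := Matrix.nonsing_inv_mul _ hSdet
  have hSSi : S * S⁻¹ = 1 := Matrix.mul_nonsing_inv _ hSdet
  have hSinv2 : S⁻¹ * S⁻¹ = Δ⁻¹ := by rw [← hSS, Matrix.mul_inv_rev]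
  have hSiH : S⁻¹ᴴ = S⁻¹ := by rw [Matrix.conjTranspose_nonsing_inv, hSH]
  -- γ facts
  have hβn : 0 ≤ (1 - β) / n := by
    apply div_nonneg (by linarith) (by positivity)
  have hγ2 : γ * γ = (1 - β) / n := by rw [hγ]; exact Real.mul_self_sqrt hβn
  have hγlam : (1 - β) / n ≤ lam := by
    rw [div_le_iff₀ (by positivity : (0:ℝ) < (n:ℝ))]
    nlinarith
  set c : ℂ := (((1 - β) / n : ℝ) : ℂ) with hcdef
  -- sum of μ μᴴ
  have hμi : ∀ i, μ i * (μ i)ᴴ = c • (Δ⁻¹ * (ψ i * (ψ i)ᴴ) * Δ⁻¹) := by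
    intro i
    rw [hμ i, Matrix.conjTranspose_smul, RCLike.star_def, Complex.conj_ofReal,
      Matrix.smul_mul, Matrix.mul_smul, smul_smul, ← Complex.ofReal_mul, hγ2]
    congr 1
    rw [Matrix.conjTranspose_mul, hΔiH]
    simp only [Matrix.mul_assoc]
  have hμμ : ∑ i, μ i * (μ i)ᴴ = c • Δ⁻¹ := by
    rw [Finset.sum_congr rfl fun i _ => hμi i, ← Finset.smul_sum]
    congr 1
    rw [← Matrix.sum_mul, ← Matrix.mul_sum, hsumψ, Matrix.nonsing_inv_mul _ hΔinv,
      Matrix.one_mul]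
  -- Δ - c•1 is PSD via the spectral theorem
  have hDγ : (Δ - c • 1).PosSemidef := by
    have hspec := hΔH.spectral_theorem
    set V : Matrix (Fin n) (Fin n) ℂ := (hΔH.eigenvectorUnitary : Matrix (Fin n) (Fin n) ℂ)
      with hV
    have hVV : V * Vᴴ = 1 := by
      rw [← Matrix.star_eq_conjTranspose]
      exact Matrix.mem_unitaryGroup_iff.mp hΔH.eigenvectorUnitary.2
    have hdiag : (Matrix.diagonal
        (fun i => ((hΔH.eigenvalues i - (1 - β) / n : ℝ) : ℂ))).PosSemidef := by
      refine Matrix.posSemidef_diagonal_iff.mpr fun i => ?_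
      refine Complex.zero_le_real.mpr ?_
      have h8 : lam ≤ hΔH.eigenvalues i := hlam.2 ⟨i, rfl⟩
      linarith [hγlam]
    have hdiageq : Matrix.diagonal (fun i => ((hΔH.eigenvalues i - (1 - β) / n : ℝ) : ℂ))
        = Matrix.diagonal (RCLike.ofReal ∘ hΔH.eigenvalues) - c • 1 := by
      rw [← Matrix.diagonal_one, ← Matrix.diagonal_smul, Matrix.diagonal_sub]
      simp [hcdef, Complex.ofReal_sub]
    have hDelta : V * Matrix.diagonal (RCLike.ofReal ∘ hΔH.eigenvalues) * Vᴴ = Δ := by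
      rw [← Matrix.star_eq_conjTranspose]
      exact hspec.symm
    have hsplit : Δ - c • 1
        = V * (Matrix.diagonal (RCLike.ofReal ∘ hΔH.eigenvalues) - c • 1) * Vᴴ := by
      rw [Matrix.mul_sub, Matrix.sub_mul, hDelta, Matrix.mul_smul, Matrix.mul_one,
        Matrix.smul_mul, hVV]
    rw [hsplit, ← hdiageq]
    exact hdiag.mul_mul_conjTranspose_same V
  have hone' : 1 - ∑ i, μ i * (μ i)ᴴ = S⁻¹ * (Δ - c • 1) * S⁻¹ᴴ := by
    rw [hμμ, hSiH, Matrix.mul_sub, Matrix.sub_mul]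
    congr 1
    · rw [← hSS, Matrix.nonsing_inv_mul_cancel_left _ _ hSdet, hSSi]
    · rw [Matrix.mul_smul, Matrix.mul_one, Matrix.smul_mul, hSinv2]
  refine ⟨?_, ?_, ?_⟩
  · rw [hone']
    exact hDγ.mul_mul_conjTranspose_same S⁻¹
  · rw [hμμ, Matrix.mul_sub, Matrix.mul_one, Matrix.trace_sub, hTrΔ, Matrix.mul_smul,
      Matrix.trace_smul, Matrix.mul_nonsing_inv _ hΔinv, Matrix.trace_one]
    have h5 : ((1 - β) / n : ℝ) * (n : ℝ) = 1 - β := div_mul_cancel₀ _ hn0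
    rw [hcdef]
    simp only [Fintype.card_fin, smul_eq_mul]
    rw [show ((n : ℕ) : ℂ) = (((n : ℕ) : ℝ) : ℂ) by push_cast; ring, ← Complex.ofReal_mul, h5]
    push_cast
    ring
  · intro N0 N hN0 hN hsum1 htr0
    have hαΔψ : ∀ i, ((α : ℂ) • Δ - ψ i * (ψ i)ᴴ).PosSemidef := by
      intro i
      set M := S⁻¹ * ψ i with hM
      have hMM : Mᴴ * M = (α : ℂ) • 1 := by
        rw [hM, Matrix.conjTranspose_mul, hSiH]
        calc (ψ i)ᴴ * S⁻¹ * (S⁻¹ * ψ i) = (ψ i)ᴴ * (S⁻¹ * S⁻¹) * ψ i := by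
              simp only [Matrix.mul_assoc]
          _ = (α : ℂ) • 1 := by rw [hSinv2]; exact hkey i
      set B := (α : ℂ) • (1 : Matrix (Fin n) (Fin n) ℂ) - M * Mᴴ with hB
      have hBH : Bᴴ = B := by
        rw [hB]
        simp [Matrix.conjTranspose_sub, Matrix.conjTranspose_smul, Matrix.conjTranspose_mul,
          RCLike.star_def, Complex.conj_ofReal]
      have hMM4 : M * Mᴴ * (M * Mᴴ) = (α : ℂ) • (M * Mᴴ) := by
        calc M * Mᴴ * (M * Mᴴ) = M * (Mᴴ * M) * Mᴴ := by simp only [Matrix.mul_assoc]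
          _ = (α : ℂ) • (M * Mᴴ) := by
              rw [hMM, Matrix.mul_smul, Matrix.mul_one, Matrix.smul_mul]
      have hBB : B * B = (α : ℂ) • B := by
        rw [hB, Matrix.sub_mul, Matrix.mul_sub, Matrix.mul_sub, hMM4]
        simp only [Matrix.smul_mul, Matrix.mul_smul, Matrix.one_mul, Matrix.mul_one, smul_sub,
          smul_smul]
        abel
      have hα0 : (α : ℂ) ≠ 0 := by
        simpa using (Complex.ofReal_ne_zero.mpr hαpos.ne')
      have hBform : B = ((α : ℂ))⁻¹ • (B * B) := by
        rw [hBB, smul_smul, inv_mul_cancel₀ hα0, one_smul]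
      have hBpsd : B.PosSemidef := by
        refine Matrix.PosSemidef.of_dotProduct_mulVec_nonneg hBH fun x => ?_
        have e1 : dotProduct (star x) (B *ᵥ x)
            = ((α : ℂ))⁻¹ * dotProduct (star (B *ᵥ x)) (B *ᵥ x) := by
          conv_lhs => rw [hBform]
          rw [Matrix.smul_mulVec, dotProduct_smul, smul_eq_mul]
          congr 1
          rw [← Matrix.mulVec_mulVec, Matrix.dotProduct_mulVec, Matrix.star_mulVec, hBH]
        rw [e1]
        apply mul_nonneg
        · rw [show ((α : ℂ))⁻¹ = ((α⁻¹ : ℝ) : ℂ) by push_cast; ring]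
          exact Complex.zero_le_real.mpr (by positivity)
        · exact dotProduct_star_self_nonneg _
      have hMS : Mᴴ * S = (ψ i)ᴴ := by
        rw [hM, Matrix.conjTranspose_mul, hSiH, Matrix.mul_assoc, hSiS, Matrix.mul_one]
      have hSM : S * M = ψ i := by rw [hM, ← Matrix.mul_assoc, hSSi, Matrix.one_mul]
      have hconj : (α : ℂ) • Δ - ψ i * (ψ i)ᴴ = S * B * Sᴴ := by
        rw [hB, hSH, Matrix.mul_sub, Matrix.sub_mul]
        congr 1
        · rw [Matrix.mul_smul, Matrix.mul_one, Matrix.smul_mul, hSS]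
        · calc ψ i * (ψ i)ᴴ = (S * M) * (Mᴴ * S) := by rw [hSM, hMS]
            _ = S * (M * Mᴴ) * S := by simp only [Matrix.mul_assoc]
      rw [hconj]
      exact hBpsd.mul_mul_conjTranspose_same S
    have hbound : ∀ i, ((ψ i * (ψ i)ᴴ * N i).trace).re ≤ α * ((Δ * N i).trace).re := by
      intro i
      have h0 := psd_trace_mul_re_nonneg (hαΔψ i) (hN i)
      have e : (((α : ℂ) • Δ - ψ i * (ψ i)ᴴ) * N i).trace
          = (α : ℂ) * (Δ * N i).trace - (ψ i * (ψ i)ᴴ * N i).trace := by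
        rw [Matrix.sub_mul, Matrix.trace_sub, Matrix.smul_mul, Matrix.trace_smul, smul_eq_mul]
      rw [e, Complex.sub_re, Complex.re_ofReal_mul] at h0
      linarith
    have hsumN : (∑ i, ((Δ * N i).trace).re) = 1 - β := by
      have h7 : ∑ i, N i = 1 - N0 := by rw [← hsum1]; abel
      have h6 : ∑ i, (Δ * N i).trace = 1 - (β : ℂ) := by
        rw [← Matrix.trace_sum, ← Matrix.mul_sum, h7, Matrix.mul_sub, Matrix.mul_one,
          Matrix.trace_sub, hTrΔ, htr0]
      have h8 := congrArg Complex.re h6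
      rw [Complex.re_sum] at h8
      simpa using h8
    have hLHS : (1 / m : ℝ) * ∑ i, ((ρ i * N i).trace).re
        = ∑ i, ((ψ i * (ψ i)ᴴ * N i).trace).re := by
      rw [Finset.mul_sum]
      refine Finset.sum_congr rfl fun i _ => ?_
      rw [hρψ i, Matrix.smul_mul, Matrix.trace_smul, smul_eq_mul,
        show ((m : ℕ) : ℂ) = (((m : ℕ) : ℝ) : ℂ) by push_cast; ring, Complex.re_ofReal_mul]
      field_simp
    have hRHSi : ∀ i, ((ρ i * (μ i * (μ i)ᴴ)).trace).re
        = (m : ℝ) * ((1 - β) / n * (α * (α * s))) := by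
      intro i
      have eC : ρ i * (μ i * (μ i)ᴴ)
          = ((m : ℂ) * c) • (ψ i * (ψ i)ᴴ * (Δ⁻¹ * (ψ i * (ψ i)ᴴ) * Δ⁻¹)) := by
        rw [hρψ i, hμi i, Matrix.smul_mul, Matrix.mul_smul, smul_smul]
      have eT : (ψ i * (ψ i)ᴴ * (Δ⁻¹ * (ψ i * (ψ i)ᴴ) * Δ⁻¹)).trace
          = ((α : ℂ) * (α * s)) := by
        rw [← Matrix.trace_mul_cycle ((ψ i)ᴴ) (Δ⁻¹ * (ψ i * (ψ i)ᴴ) * Δ⁻¹) (ψ i)]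
        have e2 : (ψ i)ᴴ * (Δ⁻¹ * (ψ i * (ψ i)ᴴ) * Δ⁻¹) * ψ i
            = ((ψ i)ᴴ * Δ⁻¹ * ψ i) * ((ψ i)ᴴ * Δ⁻¹ * ψ i) := by
          simp only [Matrix.mul_assoc]
        rw [e2, hkey i, Matrix.smul_mul, Matrix.one_mul, Matrix.trace_smul, Matrix.trace_smul,
          Matrix.trace_one, smul_eq_mul, smul_eq_mul]
        push_cast [Fintype.card_fin]
        ring
      rw [eC, Matrix.trace_smul, smul_eq_mul, eT, hcdef,
        ← Complex.ofReal_re ((m : ℝ) * ((1 - β) / n * (α * (α * s))))]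
      congr 1
      push_cast
      ring
    have hRHS : (1 / m : ℝ) * ∑ i, ((ρ i * (μ i * (μ i)ᴴ)).trace).re = α * (1 - β) := by
      rw [Finset.sum_congr rfl fun i _ => hRHSi i]
      rw [Finset.sum_const, Finset.card_univ, Fintype.card_fin, nsmul_eq_mul]
      have hmr : (m : ℝ) ≠ 0 := Nat.cast_ne_zero.mpr hm.ne'
      have h10 : ((1 - β) / (n : ℝ)) * ((m : ℝ) * (α * s)) = 1 - β := by
        rw [hmαs]; exact div_mul_cancel₀ _ hn0
      have h11 : (m : ℝ) * ((1 - β) / n * (α * (α * s))) = α * (1 - β) := by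
        linear_combination α * h10
      rw [h11, one_div, inv_mul_cancel_left₀ hmr]
    rw [hLHS, hRHS]
    calc ∑ i, ((ψ i * (ψ i)ᴴ * N i).trace).re ≤ ∑ i, α * ((Δ * N i).trace).re :=
          Finset.sum_le_sum fun i _ => hbound i
      _ = α * (1 - β) := by rw [← Finset.mul_sum, hsumN]
end

section
/- The optimal measurement for a GU state set can be chosen GU: Let {ρ_i = U_i ρ U_i^*} be a GU state set and fix 0 ≤ β < 1. Then there exists a positive semidefinite Hermitian n×n matrix Π such that the family Π_i = U_i Π U_i^* (1 ≤ i ≤ m), Π_0 = I − Σ_{i=1}^m Π_i, is a measurement with P_I = β, and P_D({Π_i}) ≥ P_D({Π'_i}) for every measurement {Π'_i}_{i=0}^m with P_I({Π'_i}) = β. -/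
open Matrix BigOperators ComplexOrder

/-!
Measurements with inconclusive probability `β` form a compact set (every effect lies in the
Loewner interval `[0, 1]`) on which `P_D` is continuous, so an optimal measurement `{Π'_i}` exists.
Averaging it over the group, `Π = (1/m) Σ_a U_a^* Π'_a U_a`, gives a GU measurement: left and right
multiplication by `U_a` permute the group, so `Σ_i U_i Π U_i^*` is the group average of `1 - Π'_0`.
Hence `Π_0` is the group average of `Π'_0`, with the same `P_I` because `Δ` is invariant, and
`Tr(ρ_i U_i Π U_i^*) = Tr(ρ Π) = (1/m) Σ_a Tr(ρ_a Π'_a)`, so `P_D` is unchanged.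
-/

theorem Function.Injective.sum_comp_mul_left {M β ι : Type*} [Monoid M] [AddCommMonoid β]
    [Fintype ι] {U : ι → M} (hinj : Function.Injective U) (hmul : ∀ i j, ∃ k, U i * U j = U k)
    {a : ι} (ha : IsUnit (U a)) (f : M → β) :
    ∑ i, f (U a * U i) = ∑ i, f (U i) := by
  choose k hk using hmul a
  have hk_inj : Function.Injective k := fun i j hij =>
    hinj (ha.mul_left_cancel (by rw [hk, hk, hij]))
  simp only [hk]
  exact (Finite.injective_iff_bijective.mp hk_inj).sum_comp (f ∘ U)

theorem Function.Injective.sum_comp_mul_right {M β ι : Type*} [Monoid M] [AddCommMonoid β]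
    [Fintype ι] {U : ι → M} (hinj : Function.Injective U) (hmul : ∀ i j, ∃ k, U i * U j = U k)
    {a : ι} (ha : IsUnit (U a)) (f : M → β) :
    ∑ i, f (U i * U a) = ∑ i, f (U i) := by
  choose k hk using fun i => hmul i a
  have hk_inj : Function.Injective k := fun i j hij =>
    hinj (ha.mul_right_cancel (by rw [hk, hk, hij]))
  simp only [hk]
  exact (Finite.injective_iff_bijective.mp hk_inj).sum_comp (f ∘ U)

namespace Matrix

variable {n ι : Type*} [Fintype n]

theorem mul_mul_conjTranspose_mul (V W Y : Matrix n n ℂ) :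
    V * W * Y * (V * W)ᴴ = V * (W * Y * Wᴴ) * Vᴴ := by
  simp only [conjTranspose_mul, Matrix.mul_assoc]

theorem trace_mul_conj (Y Z V : Matrix n n ℂ) :
    (Y * (V * Z * Vᴴ)).trace = (Vᴴ * Y * V * Z).trace := by
  rw [← Matrix.mul_assoc, trace_mul_comm, ← Matrix.mul_assoc, ← Matrix.mul_assoc]

theorem trace_mul_conjTranspose_conj (Y Z V : Matrix n n ℂ) :
    (Y * (Vᴴ * Z * V)).trace = (V * Y * Vᴴ * Z).trace := by
  simpa using trace_mul_conj Y Z Vᴴ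

section OrbitSum

variable [Fintype ι]

def orbitSum (U : ι → Matrix n n ℂ) : Matrix n n ℂ →ₗ[ℂ] Matrix n n ℂ :=
  ∑ i, LinearMap.mulRight ℂ (U i)ᴴ ∘ₗ LinearMap.mulLeft ℂ (U i)

@[simp]
theorem orbitSum_apply (U : ι → Matrix n n ℂ) (X : Matrix n n ℂ) :
    orbitSum U X = ∑ i, U i * X * (U i)ᴴ := by
  simp [orbitSum]

theorem PosSemidef.orbitSum {X : Matrix n n ℂ} (hX : X.PosSemidef) (U : ι → Matrix n n ℂ) :
    (orbitSum U X).PosSemidef := by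
  rw [orbitSum_apply]
  exact posSemidef_sum _ fun i _ => hX.mul_mul_conjTranspose_same (U i)

theorem trace_mul_orbitSum_of_conj_eq {U : ι → Matrix n n ℂ} {Δ : Matrix n n ℂ}
    (hΔ : ∀ a, (U a)ᴴ * Δ * U a = Δ) (X : Matrix n n ℂ) :
    (Δ * orbitSum U X).trace = Fintype.card ι * (Δ * X).trace := by
  simp only [orbitSum_apply, Finset.mul_sum, trace_sum, trace_mul_conj, hΔ, Finset.sum_const,
    Finset.card_univ, nsmul_eq_mul]

end OrbitSum

variable [DecidableEq n]

theorem conj_conjTranspose_conj {V : Matrix n n ℂ} (hV : V * Vᴴ = 1) (X : Matrix n n ℂ) :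
    V * (Vᴴ * X * V) * Vᴴ = X := by
  simp only [← Matrix.mul_assoc, hV, Matrix.one_mul]
  rw [Matrix.mul_assoc, hV, Matrix.mul_one]

theorem trace_conj_of_conjTranspose_mul {V : Matrix n n ℂ} (hV : Vᴴ * V = 1) (X : Matrix n n ℂ) :
    (V * X * Vᴴ).trace = X.trace := by
  rw [trace_mul_comm, ← Matrix.mul_assoc, hV, Matrix.one_mul]

theorem trace_conj_mul_conj {V : Matrix n n ℂ} (hV : Vᴴ * V = 1) (Y Z : Matrix n n ℂ) :
    (V * Y * Vᴴ * (V * Z * Vᴴ)).trace = (Y * Z).trace := by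
  rw [← trace_conj_of_conjTranspose_mul hV (Y * Z)]
  simp only [Matrix.mul_assoc]
  rw [← Matrix.mul_assoc Vᴴ, hV, Matrix.one_mul]

structure IsFiniteUnitaryGroup (U : ι → Matrix n n ℂ) : Prop where
  mul_conjTranspose : ∀ i, U i * (U i)ᴴ = 1
  injective : Function.Injective U
  mul_mem : ∀ i j, ∃ k, U i * U j = U k

namespace IsFiniteUnitaryGroup

variable {U : ι → Matrix n n ℂ} (hU : IsFiniteUnitaryGroup U)
include hU

theorem conjTranspose_mul (i : ι) : (U i)ᴴ * U i = 1 :=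
  mul_eq_one_comm.mp (hU.mul_conjTranspose i)

theorem isUnit (i : ι) : IsUnit (U i) :=
  .of_mul_eq_one _ (hU.mul_conjTranspose i)

variable [Fintype ι]

theorem trace_orbitSum (X : Matrix n n ℂ) :
    (orbitSum U X).trace = Fintype.card ι * X.trace := by
  simp [trace_sum, trace_conj_of_conjTranspose_mul (hU.conjTranspose_mul _)]

theorem orbitSum_one : orbitSum U 1 = (Fintype.card ι : ℂ) • 1 := by
  simp only [orbitSum_apply, Matrix.mul_one, hU.mul_conjTranspose, Finset.sum_const,
    Finset.card_univ, Nat.cast_smul_eq_nsmul]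

theorem conj_orbitSum (a : ι) (X : Matrix n n ℂ) :
    U a * orbitSum U X * (U a)ᴴ = orbitSum U X := by
  simp only [orbitSum_apply, Finset.mul_sum, Finset.sum_mul, ← mul_mul_conjTranspose_mul]
  exact hU.injective.sum_comp_mul_left hU.mul_mem (hU.isUnit a) fun V => V * X * Vᴴ

theorem conjTranspose_conj_orbitSum (a : ι) (X : Matrix n n ℂ) :
    (U a)ᴴ * orbitSum U X * U a = orbitSum U X := by
  conv_lhs => rw [← hU.conj_orbitSum a X]
  simpa using conj_conjTranspose_conj (V := (U a)ᴴ) (by simpa using hU.conjTranspose_mul a)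
    (orbitSum U X)

theorem orbitSum_conjTranspose_conj (a : ι) (X : Matrix n n ℂ) :
    orbitSum U ((U a)ᴴ * X * U a) = orbitSum U X := by
  simp only [orbitSum_apply]
  refine (hU.injective.sum_comp_mul_right hU.mul_mem (hU.isUnit a)
    fun V => V * ((U a)ᴴ * X * U a) * Vᴴ).symm.trans ?_
  simp only [mul_mul_conjTranspose_mul, conj_conjTranspose_conj (hU.mul_conjTranspose a)]

end IsFiniteUnitaryGroup

end Matrix

open Matrix

section Measurements

variable {n ι : Type*} [Fintype n] [Fintype ι]

noncomputable def symmetrizedEffect (U N : ι → Matrix n n ℂ) : Matrix n n ℂ :=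
  (Fintype.card ι : ℂ)⁻¹ • ∑ a, (U a)ᴴ * N a * U a

theorem posSemidef_symmetrizedEffect (U : ι → Matrix n n ℂ) {N : ι → Matrix n n ℂ}
    (hN : ∀ a, (N a).PosSemidef) : (symmetrizedEffect U N).PosSemidef :=
  (posSemidef_sum _ fun a _ => (hN a).conjTranspose_mul_mul_same (U a)).smul (by positivity)

variable [DecidableEq n]

namespace Matrix.IsFiniteUnitaryGroup

variable {U : ι → Matrix n n ℂ} (hU : IsFiniteUnitaryGroup U)
include hU

theorem one_sub_orbitSum_symmetrizedEffect [Nonempty ι] {N₀ : Matrix n n ℂ}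
    {N : ι → Matrix n n ℂ} (hsum : N₀ + ∑ a, N a = 1) :
    1 - orbitSum U (symmetrizedEffect U N) = (Fintype.card ι : ℂ)⁻¹ • orbitSum U N₀ := by
  have hcard : (Fintype.card ι : ℂ) ≠ 0 := by simp
  rw [symmetrizedEffect, map_smul, map_sum]
  simp only [hU.orbitSum_conjTranspose_conj]
  rw [← map_sum, eq_sub_of_add_eq' hsum, map_sub, hU.orbitSum_one, smul_sub, smul_smul,
    inv_mul_cancel₀ hcard, one_smul, sub_sub_cancel]

theorem sum_trace_conj_mul_conj_symmetrizedEffect [Nonempty ι] (ρ : Matrix n n ℂ)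
    (N : ι → Matrix n n ℂ) :
    ∑ i, (U i * ρ * (U i)ᴴ * (U i * symmetrizedEffect U N * (U i)ᴴ)).trace
      = ∑ a, (U a * ρ * (U a)ᴴ * N a).trace := by
  have hcard : (Fintype.card ι : ℂ) ≠ 0 := by simp
  calc ∑ i, (U i * ρ * (U i)ᴴ * (U i * symmetrizedEffect U N * (U i)ᴴ)).trace
      = ∑ _i : ι, (ρ * symmetrizedEffect U N).trace :=
        Finset.sum_congr rfl fun i _ => trace_conj_mul_conj (hU.conjTranspose_mul i) _ _
    _ = Fintype.card ι * (ρ * symmetrizedEffect U N).trace := by simp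
    _ = ∑ a, (U a * ρ * (U a)ᴴ * N a).trace := by
        rw [symmetrizedEffect, Matrix.mul_smul, trace_smul, Matrix.mul_sum, trace_sum,
          smul_eq_mul, mul_inv_cancel_left₀ hcard]
        simp only [trace_mul_conjTranspose_conj]

end Matrix.IsFiniteUnitaryGroup

/-- `N.1` is the inconclusive effect `Π₀` and `N.2 i` the effect `Π_i`. -/
def measurementsWithInconclusiveProb (Δ : Matrix n n ℂ) (β : ℝ) :
    Set (Matrix n n ℂ × (ι → Matrix n n ℂ)) :=
  {N | N.1.PosSemidef ∧ (∀ i, (N.2 i).PosSemidef) ∧ N.1 + ∑ i, N.2 i = 1 ∧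
    (Δ * N.1).trace = β}

open scoped MatrixOrder in
theorem Matrix.isCompact_Icc_zero_one : IsCompact (Set.Icc (0 : Matrix n n ℂ) 1) := by
  open scoped Matrix.Norms.L2Operator in
  exact Metric.isCompact_of_isClosed_isBounded isClosed_Icc <|
    Metric.isBounded_closedBall.subset fun A hA =>
      mem_closedBall_zero_iff.mpr (CStarAlgebra.mem_Icc_iff_norm_le_one.mp hA).2

open scoped MatrixOrder in
theorem isCompact_measurementsWithInconclusiveProb (Δ : Matrix n n ℂ) (β : ℝ) :
    IsCompact (measurementsWithInconclusiveProb (ι := ι) Δ β) := by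
  have hpsd : IsClosed {A : Matrix n n ℂ | A.PosSemidef} := by
    open scoped Matrix.Norms.L2Operator in
    simpa only [nonneg_iff_posSemidef, id] using
      isClosed_le (continuous_const (y := (0 : Matrix n n ℂ))) continuous_id
  refine (isCompact_Icc_zero_one.prod (isCompact_univ_pi fun _ => isCompact_Icc_zero_one))
    |>.of_isClosed_subset ?_ ?_
  · simp only [measurementsWithInconclusiveProb, Set.ofPred_and, Set.ofPred_forall]
    refine (hpsd.preimage continuous_fst).inter ((isClosed_iInter fun i =>
      hpsd.preimage ((continuous_apply i).comp continuous_snd)).inter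
        ((isClosed_eq (by fun_prop) continuous_const).inter
          (isClosed_eq (by fun_prop) continuous_const)))
  · rintro ⟨N₀, N⟩ ⟨h₀, h, hsum, -⟩
    simp only [← nonneg_iff_posSemidef] at h₀ h
    refine ⟨⟨h₀, hsum ▸ le_add_of_nonneg_right (Finset.sum_nonneg fun i _ => h i)⟩,
      fun i _ => ⟨h i, hsum ▸ ?_⟩⟩
    exact (Finset.single_le_sum (fun j _ => h j) (Finset.mem_univ i)).trans
      (le_add_of_nonneg_left h₀)

theorem measurementsWithInconclusiveProb_nonempty [Nonempty ι] {Δ : Matrix n n ℂ}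
    (hΔ : Δ.trace = 1) {β : ℝ} (hβ₀ : 0 ≤ β) (hβ₁ : β ≤ 1) :
    (measurementsWithInconclusiveProb (ι := ι) Δ β).Nonempty := by
  have hcard : (Fintype.card ι : ℂ) ≠ 0 := by simp
  refine ⟨((β : ℂ) • 1, fun _ => (((1 - β) / Fintype.card ι : ℝ) : ℂ) • 1),
    PosSemidef.one.smul (by exact_mod_cast hβ₀),
    fun _ => PosSemidef.one.smul (by norm_cast; positivity), ?_, by simp [hΔ]⟩
  simp only [Finset.sum_const, Finset.card_univ, ← Nat.cast_smul_eq_nsmul ℂ, smul_smul,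
    ← add_smul]
  push_cast
  rw [mul_div_cancel₀ _ hcard, add_sub_cancel, one_smul]

end Measurements

theorem stmt_15_general {n m : ℕ} (hm : 0 < m)
    (U : Fin m → Matrix (Fin n) (Fin n) ℂ)
    (hUunit : ∀ i, U i * (U i)ᴴ = 1)
    (hUinj : Function.Injective U)
    (hUmul : ∀ i j, ∃ k, U i * U j = U k)
    (ρgen : Matrix (Fin n) (Fin n) ℂ)
    (hρgentr : ρgen.trace = 1)
    (ρ : Fin m → Matrix (Fin n) (Fin n) ℂ)
    (hρ : ∀ i, ρ i = U i * ρgen * (U i)ᴴ)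
    (Δ : Matrix (Fin n) (Fin n) ℂ) (hΔ : Δ = (1 / (m : ℂ)) • ∑ i, ρ i)
    (β : ℝ) (hβ0 : 0 ≤ β) (hβ1 : β < 1) :
    ∃ P : Matrix (Fin n) (Fin n) ℂ, P.PosSemidef ∧
      (1 - ∑ i, U i * P * (U i)ᴴ).PosSemidef ∧
      (Δ * (1 - ∑ i, U i * P * (U i)ᴴ)).trace = (β : ℂ) ∧
      ∀ (N0 : Matrix (Fin n) (Fin n) ℂ) (N : Fin m → Matrix (Fin n) (Fin n) ℂ),
        N0.PosSemidef → (∀ i, (N i).PosSemidef) → (N0 + ∑ i, N i = 1) →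
        (Δ * N0).trace = (β : ℂ) →
        (1 / m : ℝ) * ∑ i, ((ρ i * N i).trace).re
          ≤ (1 / m : ℝ) * ∑ i, ((ρ i * (U i * P * (U i)ᴴ)).trace).re := by
  have : Nonempty (Fin m) := ⟨⟨0, hm⟩⟩
  have hU : IsFiniteUnitaryGroup U := ⟨hUunit, hUinj, hUmul⟩
  have hΔ_orbit : Δ = (Fintype.card (Fin m) : ℂ)⁻¹ • orbitSum U ρgen := by
    simp [hΔ, hρ]
  have hΔ_trace : Δ.trace = 1 := by
    rw [hΔ_orbit, trace_smul, hU.trace_orbitSum, hρgentr, mul_one, smul_eq_mul,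
      inv_mul_cancel₀ (Nat.cast_ne_zero.mpr Fintype.card_ne_zero)]
  have hΔ_inv : ∀ a, (U a)ᴴ * Δ * U a = Δ := fun a => by
    rw [hΔ_orbit, Matrix.mul_smul, Matrix.smul_mul, hU.conjTranspose_conj_orbitSum]
  obtain ⟨⟨N₀, N⟩, ⟨hN₀, hN, hsum, hN₀β⟩, hmax⟩ :=
    (isCompact_measurementsWithInconclusiveProb Δ β).exists_isMaxOn
      (measurementsWithInconclusiveProb_nonempty hΔ_trace hβ0 hβ1.le)
      (show Continuous fun N : Matrix (Fin n) (Fin n) ℂ × (Fin m → Matrix (Fin n) (Fin n) ℂ) =>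
        ∑ i, ((ρ i * N.2 i).trace).re by fun_prop).continuousOn
  have hP₀ := hU.one_sub_orbitSum_symmetrizedEffect hsum
  rw [orbitSum_apply] at hP₀
  refine ⟨symmetrizedEffect U N, posSemidef_symmetrizedEffect U hN, hP₀ ▸ (hN₀.orbitSum U).smul
    (by positivity), ?_, fun N₀' N' h₀ h hsum' hβ' => ?_⟩
  · rw [hP₀, Matrix.mul_smul, trace_smul, trace_mul_orbitSum_of_conj_eq hΔ_inv, hN₀β, smul_eq_mul,
      inv_mul_cancel_left₀ (Nat.cast_ne_zero.mpr Fintype.card_ne_zero)]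
  · refine mul_le_mul_of_nonneg_left ?_ (by positivity)
    have hopt := hmax (show (N₀', N') ∈ measurementsWithInconclusiveProb Δ β from
      ⟨h₀, h, hsum', hβ'⟩)
    simp only [Set.mem_ofPred_eq, hρ, ← Complex.re_sum] at hopt ⊢
    rwa [hU.sum_trace_conj_mul_conj_symmetrizedEffect]

/-- The optimal measurement for a GU state set can be chosen GU: for every
0 ≤ β < 1 there is a positive semidefinite Π such that Π_i = U_i Π U_i^*
(with Π₀ = I − Σ_i Π_i) is a measurement with P_I = β that maximizes P_D
among all measurements with P_I = β. -/
theorem stmt_15 {n m : ℕ} (hm : 0 < m)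
    (U : Fin m → Matrix (Fin n) (Fin n) ℂ)
    (hUunit : ∀ i, U i * (U i)ᴴ = 1)
    (hUinj : Function.Injective U)
    (hU1 : U ⟨0, hm⟩ = 1)
    (hUmul : ∀ i j, ∃ k, U i * U j = U k)
    (hUinv : ∀ i, ∃ j, (U i)ᴴ = U j)
    (ρgen : Matrix (Fin n) (Fin n) ℂ)
    (hρgenpsd : ρgen.PosSemidef) (hρgentr : ρgen.trace = 1)
    (ρ : Fin m → Matrix (Fin n) (Fin n) ℂ)
    (hρ : ∀ i, ρ i = U i * ρgen * (U i)ᴴ)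
    (Δ : Matrix (Fin n) (Fin n) ℂ) (hΔ : Δ = (1 / (m : ℂ)) • ∑ i, ρ i)
    (β : ℝ) (hβ0 : 0 ≤ β) (hβ1 : β < 1) :
    ∃ P : Matrix (Fin n) (Fin n) ℂ, P.PosSemidef ∧
      (1 - ∑ i, U i * P * (U i)ᴴ).PosSemidef ∧
      (Δ * (1 - ∑ i, U i * P * (U i)ᴴ)).trace = (β : ℂ) ∧
      ∀ (N0 : Matrix (Fin n) (Fin n) ℂ) (N : Fin m → Matrix (Fin n) (Fin n) ℂ),
        N0.PosSemidef → (∀ i, (N i).PosSemidef) → (N0 + ∑ i, N i = 1) →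
        (Δ * N0).trace = (β : ℂ) →
        (1 / m : ℝ) * ∑ i, ((ρ i * N i).trace).re
          ≤ (1 / m : ℝ) * ∑ i, ((ρ i * (U i * P * (U i)ᴴ)).trace).re :=
  stmt_15_general hm U hUunit hUinj hUmul ρgen hρgentr ρ hρ Δ hΔ β hβ0 hβ1
end

section
/- The SIM of a compound geometrically uniform state set is CGU: for a CGU state set with Δ invertible, Δ^{-1} commutes with every U_i ∈ G, and the SIM factors μ_{ik} = γΔ^{-1}ψ_{ik} (with ψ_{ik} = √(1/(lr))φ_{ik}) satisfy μ_{ik} = U_i μ_k for all 1 ≤ i ≤ l and 1 ≤ k ≤ r, where μ_k = γΔ^{-1}(√(1/(lr))φ_k). Consequently the SIM operators satisfy Σ_{ik} = U_i (μ_kμ_k^*) U_i^*. -/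
open Matrix BigOperators ComplexOrder

/-- The SIM of a compound geometrically uniform state set is CGU: Δ⁻¹ commutes
with every U_i, and the SIM factors satisfy μ_{ik} = U_i μ_k where
μ_k = γΔ⁻¹(√(1/(lr))φ_k); consequently Σ_{ik} = U_i (μ_k μ_k^*) U_i^*. -/
theorem stmt_16 {n l r s : ℕ} (hl : 0 < l)
    (U : Fin l → Matrix (Fin n) (Fin n) ℂ)
    (hUunit : ∀ i, U i * (U i)ᴴ = 1)
    (hUinj : Function.Injective U)
    (hU1 : U ⟨0, hl⟩ = 1)
    (hUmul : ∀ i j, ∃ k, U i * U j = U k)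
    (hUinv : ∀ i, ∃ j, (U i)ᴴ = U j)
    (φ : Fin r → Matrix (Fin n) (Fin s) ℂ)
    (hφtr : ∀ k, (φ k * (φ k)ᴴ).trace = 1)
    (Δ : Matrix (Fin n) (Fin n) ℂ)
    (hΔ : Δ = (1 / ((l : ℂ) * r)) • ∑ i, ∑ k, U i * (φ k * (φ k)ᴴ) * (U i)ᴴ)
    (hΔinv : IsUnit Δ.det)
    (γ : ℝ) (hγ : 0 < γ)
    (ψ : Fin l → Fin r → Matrix (Fin n) (Fin s) ℂ)
    (hψ : ∀ i k, ψ i k = (Real.sqrt (1 / (l * r)) : ℂ) • (U i * φ k))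
    (μ : Fin l → Fin r → Matrix (Fin n) (Fin s) ℂ)
    (hμ : ∀ i k, μ i k = (γ : ℂ) • (Δ⁻¹ * ψ i k))
    (μgen : Fin r → Matrix (Fin n) (Fin s) ℂ)
    (hμgen : ∀ k, μgen k = (γ : ℂ) • (Δ⁻¹ * ((Real.sqrt (1 / (l * r)) : ℂ) • φ k))) :
    (∀ i, Δ⁻¹ * U i = U i * Δ⁻¹) ∧
    (∀ i k, μ i k = U i * μgen k) ∧
    (∀ i k, μ i k * (μ i k)ᴴ = U i * (μgen k * (μgen k)ᴴ) * (U i)ᴴ) := by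
  have hUunit' : ∀ i, (U i)ᴴ * U i = 1 := fun i =>
    mul_eq_one_comm.mp (hUunit i)
  have hcomm : ∀ i, U i * Δ = Δ * U i := by
    intro i
    have key : U i * Δ * (U i)ᴴ = Δ := by
      have hf : Function.Injective (fun j => (hUmul i j).choose) := by
        intro j1 j2 h
        apply hUinj
        have h1 := (hUmul i j1).choose_spec
        have h2 := (hUmul i j2).choose_spec
        have hUU : U i * U j1 = U i * U j2 := by
          rw [h1, h2]; exact congrArg U h
        calc U j1 = (U i)ᴴ * (U i * U j1) := by rw [← mul_assoc, hUunit', one_mul]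
          _ = (U i)ᴴ * (U i * U j2) := by rw [hUU]
          _ = U j2 := by rw [← mul_assoc, hUunit', one_mul]
      have hbij := (Finite.injective_iff_bijective).mp hf
      let e := Equiv.ofBijective _ hbij
      rw [hΔ, Matrix.mul_smul, Matrix.smul_mul]
      congr 1
      rw [Finset.mul_sum, Finset.sum_mul]
      calc ∑ j, U i * (∑ k, U j * (φ k * (φ k)ᴴ) * (U j)ᴴ) * (U i)ᴴ
          = ∑ j, ∑ k, U (e j) * (φ k * (φ k)ᴴ) * (U (e j))ᴴ := by
            apply Finset.sum_congr rfl
            intro j _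
            rw [Finset.mul_sum, Finset.sum_mul]
            apply Finset.sum_congr rfl
            intro k _
            have he : U (e j) = U i * U j := ((hUmul i j).choose_spec).symm
            rw [he]
            simp only [Matrix.conjTranspose_mul]
            noncomm_ring
          _ = ∑ j, ∑ k, U j * (φ k * (φ k)ᴴ) * (U j)ᴴ :=
            e.sum_comp (fun j => ∑ k, U j * (φ k * (φ k)ᴴ) * (U j)ᴴ)
    calc U i * Δ = U i * Δ * ((U i)ᴴ * U i) := by rw [hUunit', mul_one]
      _ = (U i * Δ * (U i)ᴴ) * U i := by noncomm_ring
      _ = Δ * U i := by rw [key]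
  have hinvcomm : ∀ i, Δ⁻¹ * U i = U i * Δ⁻¹ := by
    intro i
    calc Δ⁻¹ * U i = Δ⁻¹ * U i * (Δ * Δ⁻¹) := by
          rw [Matrix.mul_nonsing_inv _ hΔinv, mul_one]
      _ = Δ⁻¹ * (U i * Δ) * Δ⁻¹ := by noncomm_ring
      _ = Δ⁻¹ * (Δ * U i) * Δ⁻¹ := by rw [hcomm]
      _ = (Δ⁻¹ * Δ) * (U i * Δ⁻¹) := by noncomm_ring
      _ = U i * Δ⁻¹ := by rw [Matrix.nonsing_inv_mul _ hΔinv, one_mul]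
  have hfac : ∀ i k, μ i k = U i * μgen k := by
    intro i k
    rw [hμ, hψ, hμgen]
    simp only [Matrix.mul_smul]
    rw [← Matrix.mul_assoc, hinvcomm i, Matrix.mul_assoc]
  refine ⟨hinvcomm, hfac, ?_⟩
  intro i k
  rw [hfac, Matrix.conjTranspose_mul]
  simp only [Matrix.mul_assoc]
end

section
/- SIM for CGU state sets with commuting GU generators: Suppose the generators of a CGU state set are themselves GU, φ_k = V_k φ, where {V_1,…,V_r} is a finite group of n×n unitary matrices with V_1 = I, and suppose the two groups commute up to a phase: for all i, k there is a real θ(i,k) with U_i V_k = e^{iθ(i,k)} V_k U_i. Then ΦΦ^* (equivalently Δ) commutes with every product U_i V_k, and the SIM factors satisfy μ_{ik} = U_i V_k μ̄ for all i, k, where μ̄ = γΔ^{-1}(√(1/(lr))φ). In particular the SIM operators are Σ_{ik} = U_iV_k(μ̄μ̄^*)V_k^*U_i^*. -/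
open Matrix BigOperators ComplexOrder

/-- SIM for CGU state sets with commuting GU generators: if the generators are
φ_k = V_k φ for a finite group {V_k} commuting with {U_i} up to phases, then Δ
commutes with every product U_i V_k and the SIM factors satisfy
μ_{ik} = U_i V_k μ̄ with μ̄ = γΔ⁻¹(√(1/(lr))φ); consequently
Σ_{ik} = U_i V_k (μ̄μ̄^*) V_k^* U_i^*. -/
theorem stmt_18 {n l r s : ℕ} (hl : 0 < l) (hr : 0 < r)
    (U : Fin l → Matrix (Fin n) (Fin n) ℂ)
    (hUunit : ∀ i, U i * (U i)ᴴ = 1)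
    (hUinj : Function.Injective U)
    (hU1 : U ⟨0, hl⟩ = 1)
    (hUmul : ∀ i j, ∃ k, U i * U j = U k)
    (hUinv : ∀ i, ∃ j, (U i)ᴴ = U j)
    (V : Fin r → Matrix (Fin n) (Fin n) ℂ)
    (hVunit : ∀ k, V k * (V k)ᴴ = 1)
    (hVinj : Function.Injective V)
    (hV1 : V ⟨0, hr⟩ = 1)
    (hVmul : ∀ k t, ∃ u, V k * V t = V u)
    (hVinv : ∀ k, ∃ t, (V k)ᴴ = V t)
    (θ : Fin l → Fin r → ℝ)
    (hcomm : ∀ i k, U i * V k = Complex.exp ((θ i k : ℂ) * Complex.I) • (V k * U i))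
    (φ : Matrix (Fin n) (Fin s) ℂ) (hφtr : (φ * φᴴ).trace = 1)
    (φg : Fin l → Fin r → Matrix (Fin n) (Fin s) ℂ)
    (hφg : ∀ i k, φg i k = U i * (V k * φ))
    (Δ : Matrix (Fin n) (Fin n) ℂ)
    (hΔ : Δ = (1 / ((l : ℂ) * r)) • ∑ i, ∑ k, φg i k * (φg i k)ᴴ)
    (hΔinv : IsUnit Δ.det)
    (γ : ℝ) (hγ : 0 < γ)
    (ψ : Fin l → Fin r → Matrix (Fin n) (Fin s) ℂ)
    (hψ : ∀ i k, ψ i k = (Real.sqrt (1 / (l * r)) : ℂ) • φg i k)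
    (μ : Fin l → Fin r → Matrix (Fin n) (Fin s) ℂ)
    (hμ : ∀ i k, μ i k = (γ : ℂ) • (Δ⁻¹ * ψ i k))
    (μbar : Matrix (Fin n) (Fin s) ℂ)
    (hμbar : μbar = (γ : ℂ) • (Δ⁻¹ * ((Real.sqrt (1 / (l * r)) : ℂ) • φ))) :
    (∀ i k, Δ * (U i * V k) = (U i * V k) * Δ) ∧
    (∀ i k, μ i k = U i * V k * μbar) ∧
    (∀ i k, μ i k * (μ i k)ᴴ = (U i * V k) * (μbar * μbarᴴ) * (U i * V k)ᴴ) := by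
  have hUunit' : ∀ i, (U i)ᴴ * U i = 1 := fun i => mul_eq_one_comm.mp (hUunit i)
  have hVunit' : ∀ k, (V k)ᴴ * V k = 1 := fun k => mul_eq_one_comm.mp (hVunit k)
  have key : ∀ i k, Δ * (U i * V k) = (U i * V k) * Δ := by
    intro i k
    choose a ha using hUmul i
    choose b hb using hVmul k
    have hainj : Function.Injective a := by
      intro x y hxy
      apply hUinj
      have h2 : U i * U x = U i * U y := by rw [ha, ha, hxy]
      calc U x = ((U i)ᴴ * U i) * U x := by rw [hUunit' i, one_mul]
        _ = (U i)ᴴ * (U i * U x) := by rw [Matrix.mul_assoc]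
        _ = (U i)ᴴ * (U i * U y) := by rw [h2]
        _ = U y := by rw [← Matrix.mul_assoc, hUunit' i, one_mul]
    have hbinj : Function.Injective b := by
      intro x y hxy
      apply hVinj
      have h2 : V k * V x = V k * V y := by rw [hb, hb, hxy]
      calc V x = ((V k)ᴴ * V k) * V x := by rw [hVunit' k, one_mul]
        _ = (V k)ᴴ * (V k * V x) := by rw [Matrix.mul_assoc]
        _ = (V k)ᴴ * (V k * V y) := by rw [h2]
        _ = V y := by rw [← Matrix.mul_assoc, hVunit' k, one_mul]
    have habij := (Finite.injective_iff_bijective).mp hainj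
    have hbbij := (Finite.injective_iff_bijective).mp hbinj
    set W := U i * V k with hW
    have hWW : W * Wᴴ = 1 := by
      rw [hW, Matrix.conjTranspose_mul, Matrix.mul_assoc, ← Matrix.mul_assoc (V k),
        hVunit k, one_mul, hUunit i]
    have hWW' : Wᴴ * W = 1 := mul_eq_one_comm.mp hWW
    have hterm : ∀ i' k', W * (φg i' k' * (φg i' k')ᴴ) * Wᴴ
        = φg (a i') (b k') * (φg (a i') (b k'))ᴴ := by
      intro i' k'
      set e : ℂ := Complex.exp ((θ i' k : ℂ) * Complex.I) with he
      have hene : e ≠ 0 := Complex.exp_ne_zero _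
      have hVU : V k * U i' = e⁻¹ • (U i' * V k) := by
        rw [hcomm i' k, ← he, smul_smul, inv_mul_cancel₀ hene, one_smul]
      have hmain : W * φg i' k' = e⁻¹ • φg (a i') (b k') := by
        rw [hφg, hφg, hW]
        calc U i * V k * (U i' * (V k' * φ))
            = U i * ((V k * U i') * (V k' * φ)) := by
              simp only [Matrix.mul_assoc]
          _ = U i * ((e⁻¹ • (U i' * V k)) * (V k' * φ)) := by rw [hVU]
          _ = e⁻¹ • (U i * (U i' * (V k * (V k' * φ)))) := by
              rw [Matrix.smul_mul, Matrix.mul_smul]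
              simp only [Matrix.mul_assoc]
          _ = e⁻¹ • (U (a i') * (V (b k') * φ)) := by
              rw [← Matrix.mul_assoc (U i), ha, ← Matrix.mul_assoc (V k), hb]
      have hct : starRingEnd ℂ ((θ i' k : ℂ) * Complex.I)
          = -((θ i' k : ℂ) * Complex.I) := by
        simp [Complex.conj_ofReal]
      have hee : e * starRingEnd ℂ e = 1 := by
        rw [he, ← Complex.exp_conj, hct, ← Complex.exp_add, add_neg_cancel,
          Complex.exp_zero]
      have hphase : e⁻¹ * starRingEnd ℂ e⁻¹ = 1 := by
        rw [map_inv₀, ← mul_inv, hee, inv_one]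
      calc W * (φg i' k' * (φg i' k')ᴴ) * Wᴴ
          = (W * φg i' k') * (W * φg i' k')ᴴ := by
            simp only [hW, Matrix.conjTranspose_mul, Matrix.mul_assoc]
        _ = (e⁻¹ • φg (a i') (b k')) * (e⁻¹ • φg (a i') (b k'))ᴴ := by rw [hmain]
        _ = (e⁻¹ * starRingEnd ℂ e⁻¹) • (φg (a i') (b k') * (φg (a i') (b k'))ᴴ) := by
            rw [Matrix.conjTranspose_smul, Matrix.smul_mul, Matrix.mul_smul,
              smul_smul]
            rfl
        _ = φg (a i') (b k') * (φg (a i') (b k'))ᴴ := by rw [hphase, one_smul]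
    have hconj : W * Δ * Wᴴ = Δ := by
      rw [hΔ, Matrix.mul_smul, Matrix.smul_mul]
      congr 1
      rw [Matrix.mul_sum, Matrix.sum_mul]
      have step1 : ∀ i', W * (∑ k', φg i' k' * (φg i' k')ᴴ) * Wᴴ
          = ∑ k', φg (a i') (b k') * (φg (a i') (b k'))ᴴ := by
        intro i'
        rw [Matrix.mul_sum, Matrix.sum_mul]
        exact Finset.sum_congr rfl fun k' _ => hterm i' k'
      calc ∑ i', W * (∑ k', φg i' k' * (φg i' k')ᴴ) * Wᴴ
          = ∑ i', ∑ k', φg (a i') (b k') * (φg (a i') (b k'))ᴴ :=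
            Finset.sum_congr rfl fun i' _ => step1 i'
        _ = ∑ i', ∑ k', φg i' (b k') * (φg i' (b k'))ᴴ :=
            Fintype.sum_bijective a habij _ _ (fun i' => rfl)
        _ = ∑ i', ∑ k', φg i' k' * (φg i' k')ᴴ :=
            Finset.sum_congr rfl fun i' _ =>
              Fintype.sum_bijective b hbbij _ _ (fun k' => rfl)
    calc Δ * W = (W * Δ * Wᴴ) * W := by rw [hconj]
      _ = W * Δ * (Wᴴ * W) := by simp only [Matrix.mul_assoc]
      _ = W * Δ := by rw [hWW', mul_one]
  have hinvcomm : ∀ i k, Δ⁻¹ * (U i * V k) = (U i * V k) * Δ⁻¹ := by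
    intro i k
    calc Δ⁻¹ * (U i * V k) = Δ⁻¹ * (U i * V k) * (Δ * Δ⁻¹) := by
          rw [Matrix.mul_nonsing_inv _ hΔinv, mul_one]
      _ = Δ⁻¹ * ((U i * V k) * Δ) * Δ⁻¹ := by simp only [Matrix.mul_assoc]
      _ = Δ⁻¹ * (Δ * (U i * V k)) * Δ⁻¹ := by rw [← key i k]
      _ = (Δ⁻¹ * Δ) * ((U i * V k) * Δ⁻¹) := by simp only [Matrix.mul_assoc]
      _ = (U i * V k) * Δ⁻¹ := by rw [Matrix.nonsing_inv_mul _ hΔinv, one_mul]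
  have hsecond : ∀ i k, μ i k = U i * V k * μbar := by
    intro i k
    have hc : Δ⁻¹ * (U i * (V k * φ)) = U i * V k * (Δ⁻¹ * φ) := by
      calc Δ⁻¹ * (U i * (V k * φ)) = (Δ⁻¹ * (U i * V k)) * φ := by
            simp only [Matrix.mul_assoc]
        _ = ((U i * V k) * Δ⁻¹) * φ := by rw [hinvcomm]
        _ = U i * V k * (Δ⁻¹ * φ) := by simp only [Matrix.mul_assoc]
    simp only [hμ, hψ, hφg, hμbar, Matrix.mul_smul, hc]
  refine ⟨key, hsecond, fun i k => ?_⟩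
  rw [hsecond i k, Matrix.conjTranspose_mul]
  simp only [Matrix.mul_assoc]
end
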